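/- Let s,t ≥ 1 with s+t < n and N = n+2s+t, and let M be a placement of type (s,t,n−s−t) with rows a_1<⋯<a_s, b_1<⋯<b_{s+t}, c_1<⋯<c_n such that N lies in the last row and exactly one wrapping occurs from the second row to the third row during the bully path projection. Then the projected word ω=B(M) satisfies ω_1=1 and ω_2=3 if and only if: (1) there exists i < s such that a_i bullies b_{s+t−1}, b_{s+t−1} bullies c_n, a_{i+1} bullies b_{s+t}, and b_{s+t} bullies c_1 by wrapping from the second row to the third row; and (2) b_1 > c_2. -/

import Mathlib

namespace CMLQ

/-- Partial sums `S m i = m 1 + ⋯ + m i` (1-indexed). -/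
def S (m : ℕ → ℕ) (i : ℕ) : ℕ := ∑ j ∈ Finset.Icc 1 i, m j

/-- Total number of entries `N = S 1 + ⋯ + S n`. -/
def Ntot (n : ℕ) (m : ℕ → ℕ) : ℕ := ∑ i ∈ Finset.Icc 1 n, S m i

/-- `rows` (1-indexed rows, each given as a finite set of entries, the increasing
order being implicit) is a placement of type `m` with `n` rows:  row `i` has
`S m i` entries, the rows are disjoint, and together the entries are exactly
`1, …, N`. -/
def IsPlacement (n : ℕ) (m : ℕ → ℕ) (rows : ℕ → Finset ℕ) : Prop :=
  (∀ i ∈ Finset.Icc 1 n, (rows i).card = S m i) ∧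
  (∀ i, i ∉ Finset.Icc 1 n → rows i = ∅) ∧
  (∀ i j, i ≠ j → Disjoint (rows i) (rows j)) ∧
  (Finset.Icc 1 n).biUnion rows = Finset.Icc 1 (Ntot n m)

/-- Next entry of a bully path: the smallest available entry of the next row
larger than `x`, or (wrapping) the smallest available entry of the next row. -/
def nextEntry (A : Finset ℕ) (x : ℕ) : ℕ :=
  ((A.filter fun y => x < y).min.untopD (A.min.untopD 0))

/-- Run one bully path starting below `x`, through the list of available sets of
the lower rows; returns the path (one entry per lower row) and the updated
available sets. -/
def runPath (x : ℕ) : List (Finset ℕ) → List ℕ × List (Finset ℕ)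
  | [] => ([], [])
  | A :: rest =>
    let y := nextEntry A x
    let (p, rest') := runPath y rest
    (y :: p, A.erase y :: rest')

/-- Run the bully paths starting at each entry of `starts` in order. -/
def runRow : List ℕ → List (Finset ℕ) → List (List ℕ) × List (Finset ℕ)
  | [], avail => ([], avail)
  | x :: xs, avail =>
    let (p, avail') := runPath x avail
    let (ps, avail'') := runRow xs avail'
    ((x :: p) :: ps, avail'')

/-- Run the whole bully path procedure, row by row; returns the list of all
bully paths (a path starting in row `r` is recorded as its list of entries,
one in each of rows `r, r+1, …, n`; entries of the last row not on any path
are recorded as paths of length 1). -/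
def runRows : ℕ → List (Finset ℕ) → List (List ℕ)
  | 0, _ => []
  | _ + 1, [] => []
  | fuel + 1, A :: rest =>
    let (ps, rest') := runRow (A.sort (· ≤ ·)) rest
    ps ++ runRows fuel rest'

/-- The list of all bully paths of a placement with `n` rows. -/
def pathsOf (n : ℕ) (rows : ℕ → Finset ℕ) : List (List ℕ) :=
  runRows n ((List.range n).map fun i => rows (i + 1))

/-- All steps `(x, y)` of bully paths (`y` is the entry of the next row reached
from `x`). -/
def edgesOf (n : ℕ) (rows : ℕ → Finset ℕ) : List (ℕ × ℕ) :=
  ((pathsOf n rows).map fun p => p.zip p.tail).flatten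

/-- `x` bullies `y`: a bully path steps from `x` to the entry `y > x` of the
next row (a non-wrapping step). -/
def Bullies (n : ℕ) (rows : ℕ → Finset ℕ) (x y : ℕ) : Prop :=
  (x, y) ∈ edgesOf n rows ∧ x < y

/-- A bully path steps from `x` to `y` by wrapping. -/
def WrapBullies (n : ℕ) (rows : ℕ → Finset ℕ) (x y : ℕ) : Prop :=
  (x, y) ∈ edgesOf n rows ∧ y < x

/-- The number of wrapping events from row `i` to row `i+1`. -/
def wrapCount (n : ℕ) (rows : ℕ → Finset ℕ) (i : ℕ) : ℕ :=
  (edgesOf n rows).countP fun e => decide (e.2 < e.1 ∧ e.1 ∈ rows i)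

/-- The `k`-th smallest entry of row `i` (both 1-indexed). -/
def entry (rows : ℕ → Finset ℕ) (i k : ℕ) : ℕ :=
  ((rows i).sort (· ≤ ·)).getD (k - 1) 0

/-- The projected word: `wordOf n rows a` is the label of the `a`-th smallest
entry of the last row (1-indexed); a path of length `n - r + 1` starts in
row `r` and labels its last entry `r`. -/
def wordOf (n : ℕ) (rows : ℕ → Finset ℕ) (a : ℕ) : ℕ :=
  ((pathsOf n rows).findSome? fun p =>
    if p.getLast? = some (entry rows n a) then some (n + 1 - p.length) else none).getD 0

/-- A standard Young tableau of shape `lam` (rows of the shape listed from top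
to bottom), encoded as a function on 0-indexed cells `(i, j)`, vanishing
outside the shape: entries are `1, …, |lam|`, pairwise distinct, strictly
increasing along rows and down columns. -/
def IsSYT (lam : List ℕ) (T : ℕ × ℕ → ℕ) : Prop :=
  (∀ c : ℕ × ℕ, ¬(c.1 < lam.length ∧ c.2 < lam.getD c.1 0) → T c = 0) ∧
  (∀ c : ℕ × ℕ, c.1 < lam.length → c.2 < lam.getD c.1 0 → 1 ≤ T c ∧ T c ≤ lam.sum) ∧
  (∀ c c' : ℕ × ℕ, c.1 < lam.length → c.2 < lam.getD c.1 0 →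
    c'.1 < lam.length → c'.2 < lam.getD c'.1 0 → c ≠ c' → T c ≠ T c') ∧
  (∀ i j j' : ℕ, i < lam.length → j < j' → j' < lam.getD i 0 → T (i, j) < T (i, j')) ∧
  (∀ i i' j : ℕ, i < i' → i' < lam.length → j < lam.getD i 0 → j < lam.getD i' 0 →
    T (i, j) < T (i', j))

/-- `f_lam`: the number of standard Young tableaux of shape `lam`. -/
noncomputable def sytCount (lam : List ℕ) : ℕ := Set.ncard {T : ℕ × ℕ → ℕ | IsSYT lam T}

/-- Binomial coefficient with an integer lower index (`0` if negative). -/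
def chooseInt (a : ℕ) (b : ℤ) : ℕ := if 0 ≤ b then a.choose b.toNat else 0

/-- The type `(m₁, m₂, m₃) = (s, t, u)` of a three-row placement. -/
def m3 (s t u : ℕ) : ℕ → ℕ := fun i => if i = 1 then s else if i = 2 then t else if i = 3 then u else 0

/-- The type `(m₁, m₂) = (s, u)` of a two-row placement. -/
def m2 (s u : ℕ) : ℕ → ℕ := fun i => if i = 1 then s else if i = 2 then u else 0


-- basic nextEntry lemmas
lemma nextEntry_mem {A : Finset ℕ} (h : A.Nonempty) (x : ℕ) : nextEntry A x ∈ A := by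
  unfold nextEntry
  rcases (A.filter fun y => x < y).eq_empty_or_nonempty with he | hne
  · rw [he]
    simp only [Finset.min_empty, WithTop.untopD_top]
    rcases Finset.min_of_nonempty h with ⟨a, ha⟩
    rw [ha]
    exact Finset.mem_of_min ha
  · rcases Finset.min_of_nonempty hne with ⟨a, ha⟩
    rw [ha]
    exact Finset.mem_of_mem_filter a (Finset.mem_of_min ha)

lemma nextEntry_gt {A : Finset ℕ} {x y : ℕ} (hy : y ∈ A) (hxy : x < y) :
    x < nextEntry A x ∧ ∀ z ∈ A, x < z → nextEntry A x ≤ z := by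
  have hne : (A.filter fun y => x < y).Nonempty := ⟨y, Finset.mem_filter.2 ⟨hy, hxy⟩⟩
  rcases Finset.min_of_nonempty hne with ⟨a, ha⟩
  unfold nextEntry
  rw [ha]
  constructor
  · exact (Finset.mem_filter.1 (Finset.mem_of_min ha)).2
  · intro z hz hxz
    exact Finset.min_le_of_eq (Finset.mem_filter.2 ⟨hz, hxz⟩) ha

lemma nextEntry_wrap {A : Finset ℕ} (h : A.Nonempty) {x : ℕ} (hx : ∀ z ∈ A, ¬ x < z) :
    (∀ z ∈ A, nextEntry A x ≤ z) := by
  have he : (A.filter fun y => x < y) = ∅ := by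
    apply Finset.filter_eq_empty_iff.2
    intro z hz; exact hx z hz
  unfold nextEntry
  rw [he]
  simp only [Finset.min_empty, WithTop.untopD_top]
  rcases Finset.min_of_nonempty h with ⟨a, ha⟩
  rw [ha]
  intro z hz
  exact Finset.min_le_of_eq hz ha


def run2 : List ℕ → Finset ℕ → List (ℕ × ℕ) × Finset ℕ
  | [], C => ([], C)
  | b :: bs, C =>
    let c := nextEntry C b
    let r := run2 bs (C.erase c)
    ((b, c) :: r.1, r.2)

@[simp] lemma run2_cons (b : ℕ) (bs : List ℕ) (C : Finset ℕ) :
    run2 (b :: bs) C = ((b, nextEntry C b) :: (run2 bs (C.erase (nextEntry C b))).1,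
      (run2 bs (C.erase (nextEntry C b))).2) := rfl

def run12 : List ℕ → Finset ℕ → Finset ℕ → List (ℕ × ℕ × ℕ) × Finset ℕ × Finset ℕ
  | [], B, C => ([], B, C)
  | a :: as, B, C =>
    let b := nextEntry B a
    let c := nextEntry C b
    let r := run12 as (B.erase b) (C.erase c)
    ((a, b, c) :: r.1, r.2)

@[simp] lemma run12_cons (a : ℕ) (as : List ℕ) (B C : Finset ℕ) :
    run12 (a :: as) B C =
      ((a, nextEntry B a, nextEntry C (nextEntry B a)) ::
        (run12 as (B.erase (nextEntry B a)) (C.erase (nextEntry C (nextEntry B a)))).1,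
       (run12 as (B.erase (nextEntry B a)) (C.erase (nextEntry C (nextEntry B a)))).2) := rfl

lemma runRow_pair (as : List ℕ) (B C : Finset ℕ) :
    runRow as [B, C] = ((run12 as B C).1.map (fun p => [p.1, p.2.1, p.2.2]),
      [(run12 as B C).2.1, (run12 as B C).2.2]) := by
  induction as generalizing B C with
  | nil => rfl
  | cons a as ih => simp [runRow, runPath, ih]

lemma runRow_single (bs : List ℕ) (C : Finset ℕ) :
    runRow bs [C] = ((run2 bs C).1.map (fun p => [p.1, p.2]), [(run2 bs C).2]) := by
  induction bs generalizing C with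
  | nil => rfl
  | cons b bs ih => simp [runRow, runPath, ih]

lemma runRow_nil (cs : List ℕ) : runRow cs [] = (cs.map (fun c => [c]), []) := by
  induction cs with
  | nil => rfl
  | cons c cs ih => simp [runRow, runPath, ih]

lemma run12_fst (as : List ℕ) (B C : Finset ℕ) :
    (run12 as B C).1.map (fun p => (p.1, p.2.1)) = (run2 as B).1 ∧
    (run12 as B C).2.1 = (run2 as B).2 := by
  induction as generalizing B C with
  | nil => simp [run12, run2]
  | cons a as ih => simp [(ih _ _).1, (ih _ _).2]

lemma run12_snd (as : List ℕ) (B C : Finset ℕ) :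
    (run12 as B C).1.map (fun p => (p.2.1, p.2.2)) =
      (run2 ((run2 as B).1.map Prod.snd) C).1 ∧
    (run12 as B C).2.2 = (run2 ((run2 as B).1.map Prod.snd) C).2 := by
  induction as generalizing B C with
  | nil => simp [run12, run2]
  | cons a as ih => simp [(ih _ _).1, (ih _ _).2]

/-- The full structure of the 3-row bully path algorithm. -/
lemma pathsOf_three (rows : ℕ → Finset ℕ) :
    pathsOf 3 rows =
      (run12 ((rows 1).sort (· ≤ ·)) (rows 2) (rows 3)).1.map
          (fun p => [p.1, p.2.1, p.2.2]) ++
      (run2 (((run12 ((rows 1).sort (· ≤ ·)) (rows 2) (rows 3)).2.1).sort (· ≤ ·))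
          ((run12 ((rows 1).sort (· ≤ ·)) (rows 2) (rows 3)).2.2)).1.map
          (fun p => [p.1, p.2]) ++
      (((run2 (((run12 ((rows 1).sort (· ≤ ·)) (rows 2) (rows 3)).2.1).sort (· ≤ ·))
          ((run12 ((rows 1).sort (· ≤ ·)) (rows 2) (rows 3)).2.2)).2).sort (· ≤ ·)).map
          (fun c => [c]) := by
  have h3 : (List.range 3).map (fun i => rows (i + 1)) = [rows 1, rows 2, rows 3] := by
    simp [List.range_succ]
  unfold pathsOf
  rw [h3]
  show runRows 3 [rows 1, rows 2, rows 3] = _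
  rw [show (3:ℕ) = 2 + 1 from rfl]
  unfold runRows
  rw [runRow_pair]
  simp only []
  unfold runRows
  rw [runRow_single]
  simp only []
  unfold runRows
  rw [runRow_nil]
  simp only []
  unfold runRows
  simp


@[simp] lemma run2_nil (C : Finset ℕ) : run2 [] C = ([], C) := rfl

lemma run2_fst_map (bs : List ℕ) (C : Finset ℕ) : (run2 bs C).1.map Prod.fst = bs := by
  induction bs generalizing C with
  | nil => rfl
  | cons b bs ih => simp [ih]

lemma run2_length (bs : List ℕ) (C : Finset ℕ) : (run2 bs C).1.length = bs.length := by
  have := congrArg List.length (run2_fst_map bs C)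
  simpa using this

lemma run2_append (l1 l2 : List ℕ) (C : Finset ℕ) :
    run2 (l1 ++ l2) C = ((run2 l1 C).1 ++ (run2 l2 (run2 l1 C).2).1,
      (run2 l2 (run2 l1 C).2).2) := by
  induction l1 generalizing C with
  | nil => simp
  | cons b bs ih => simp [ih]

lemma run2_state_mem (bs : List ℕ) (C : Finset ℕ) (x : ℕ) :
    x ∈ (run2 bs C).2 ↔ x ∈ C ∧ ∀ p ∈ (run2 bs C).1, p.2 ≠ x := by
  induction bs generalizing C with
  | nil => simp
  | cons b bs ih =>
    simp only [run2_cons, ih, Finset.mem_erase, List.mem_cons]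
    constructor
    · rintro ⟨⟨hne, hC⟩, h2⟩
      refine ⟨hC, ?_⟩
      rintro p (rfl | hp)
      · exact fun h => hne h.symm
      · exact h2 p hp
    · rintro ⟨hC, h2⟩
      exact ⟨⟨fun h => h2 _ (Or.inl rfl) h.symm, hC⟩, fun p hp => h2 p (Or.inr hp)⟩

lemma run2_card (bs : List ℕ) (C : Finset ℕ) (h : bs.length ≤ C.card) :
    (run2 bs C).2.card = C.card - bs.length := by
  induction bs generalizing C with
  | nil => simp
  | cons b bs ih =>
    have hc : C.card ≠ 0 := by simp at h; omega
    have hCne : C.Nonempty := Finset.card_ne_zero.mp hc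
    have hmem : nextEntry C b ∈ C := nextEntry_mem hCne b
    have hcard : (C.erase (nextEntry C b)).card = C.card - 1 :=
      Finset.card_erase_of_mem hmem
    simp only [run2_cons]
    rw [ih _ (by simp at h; omega)]
    simp [hcard]; omega

lemma run2_getD (bs : List ℕ) (C : Finset ℕ) (j : ℕ) (hj : j < bs.length) :
    (run2 bs C).1.getD j (0,0) =
      (bs.getD j 0, nextEntry ((run2 (bs.take j) C).2) (bs.getD j 0)) := by
  have hsplit : bs = bs.take j ++ bs.drop j := (List.take_append_drop j bs).symm
  have hdrop : bs.drop j = bs.getD j 0 :: bs.drop (j+1) := by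
    rw [List.getD_eq_getElem _ _ hj]
    exact List.drop_eq_getElem_cons hj
  conv_lhs => rw [hsplit, run2_append]
  simp only []
  rw [List.getD_append_right _ _ _ _ (by rw [run2_length]; simp [min_eq_left (le_of_lt hj)])]
  have hlen : (run2 (bs.take j) C).1.length = j := by
    rw [run2_length]; simp [min_eq_left (le_of_lt hj)]
  rw [hlen, Nat.sub_self, hdrop]
  simp

lemma run2_snd_mem (bs : List ℕ) (C : Finset ℕ) (h : bs.length ≤ C.card) :
    ∀ p ∈ (run2 bs C).1, p.2 ∈ C := by
  induction bs generalizing C with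
  | nil => simp
  | cons b bs ih =>
    have hc : C.card ≠ 0 := by simp at h; omega
    have hCne : C.Nonempty := Finset.card_ne_zero.mp hc
    have hmem : nextEntry C b ∈ C := nextEntry_mem hCne b
    simp only [run2_cons, List.mem_cons]
    rintro p (rfl | hp)
    · exact hmem
    · have hloc : bs.length ≤ (C.erase (nextEntry C b)).card := by
        rw [Finset.card_erase_of_mem hmem]; simp at h; omega
      exact Finset.mem_of_mem_erase (ih _ hloc p hp)

lemma run2_snd_nodup (bs : List ℕ) (C : Finset ℕ) (h : bs.length ≤ C.card) :
    ((run2 bs C).1.map Prod.snd).Nodup := by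
  induction bs generalizing C with
  | nil => simp
  | cons b bs ih =>
    have hc : C.card ≠ 0 := by simp at h; omega
    have hCne : C.Nonempty := Finset.card_ne_zero.mp hc
    have hmem : nextEntry C b ∈ C := nextEntry_mem hCne b
    have hloc : bs.length ≤ (C.erase (nextEntry C b)).card := by
      rw [Finset.card_erase_of_mem hmem]; simp at h; omega
    simp only [run2_cons, List.map_cons, List.nodup_cons]
    refine ⟨?_, ih _ hloc⟩
    intro hmm
    rcases List.mem_map.1 hmm with ⟨p, hp, hp2⟩
    have := run2_snd_mem bs _ hloc p hp
    rw [hp2] at this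
    exact (Finset.mem_erase.1 this).1 rfl

/-- generic membership-by-index for lists -/
lemma mem_iff_getD {l : List ℕ} {x : ℕ} : x ∈ l ↔ ∃ i < l.length, l.getD i 0 = x := by
  constructor
  · intro hx
    rcases List.mem_iff_getElem.1 hx with ⟨i, hi, he⟩
    exact ⟨i, hi, by rw [List.getD_eq_getElem _ _ hi]; exact he⟩
  · rintro ⟨i, hi, he⟩
    rw [← he, List.getD_eq_getElem _ _ hi]
    exact List.getElem_mem hi

lemma mem_iff_getD' {l : List (ℕ × ℕ)} {x : ℕ × ℕ} :
    x ∈ l ↔ ∃ i < l.length, l.getD i (0,0) = x := by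
  constructor
  · intro hx
    rcases List.mem_iff_getElem.1 hx with ⟨i, hi, he⟩
    exact ⟨i, hi, by rw [List.getD_eq_getElem _ _ hi]; exact he⟩
  · rintro ⟨i, hi, he⟩
    rw [← he, List.getD_eq_getElem _ _ hi]
    exact List.getElem_mem hi

lemma run2_mem_iff {bs : List ℕ} {C : Finset ℕ} {p : ℕ × ℕ} :
    p ∈ (run2 bs C).1 ↔ ∃ j < bs.length,
      p = (bs.getD j 0, nextEntry ((run2 (bs.take j) C).2) (bs.getD j 0)) := by
  rw [mem_iff_getD', run2_length]
  constructor
  · rintro ⟨j, hj, he⟩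
    exact ⟨j, hj, by rw [← he, run2_getD _ _ _ hj]⟩
  · rintro ⟨j, hj, he⟩
    exact ⟨j, hj, by rw [run2_getD _ _ _ hj, he]⟩

lemma take_getD {l : List ℕ} {j i : ℕ} (hij : i < j) : (l.take j).getD i 0 = l.getD i 0 := by
  rcases Nat.lt_or_ge i l.length with hi | hi
  · rw [List.getD_eq_getElem _ _ (by simp; omega), List.getD_eq_getElem _ _ hi]
    simp
  · rw [List.getD_eq_default _ _ (by simp; omega), List.getD_eq_default _ _ hi]

lemma run2_take_state_mem (bs : List ℕ) (C : Finset ℕ) (j : ℕ) (hj : j ≤ bs.length) (x : ℕ) :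
    x ∈ (run2 (bs.take j) C).2 ↔ x ∈ C ∧ ∀ i < j,
      nextEntry ((run2 (bs.take i) C).2) (bs.getD i 0) ≠ x := by
  rw [run2_state_mem]
  constructor
  · rintro ⟨hC, h2⟩
    refine ⟨hC, fun i hi hne => ?_⟩
    have hmem : (bs.getD i 0, nextEntry ((run2 (bs.take i) C).2) (bs.getD i 0))
        ∈ (run2 (bs.take j) C).1 := by
      rw [run2_mem_iff]
      refine ⟨i, by simp; omega, ?_⟩
      rw [take_getD hi, List.take_take, min_eq_left (le_of_lt hi)]
    exact h2 _ hmem hne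
  · rintro ⟨hC, h2⟩
    refine ⟨hC, fun p hp => ?_⟩
    rw [run2_mem_iff] at hp
    rcases hp with ⟨i, hi, rfl⟩
    have hi' : i < j := by simp at hi; omega
    show nextEntry (run2 ((bs.take j).take i) C).2 ((bs.take j).getD i 0) ≠ x
    rw [take_getD hi', List.take_take, min_eq_left (le_of_lt hi')]
    exact h2 i hi'

lemma run2_take_succ (bs : List ℕ) (C : Finset ℕ) (j : ℕ) (hj : j < bs.length) :
    (run2 (bs.take (j+1)) C).2 =
      ((run2 (bs.take j) C).2).erase
        (nextEntry ((run2 (bs.take j) C).2) (bs.getD j 0)) := by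
  have h1 : bs.take (j+1) = bs.take j ++ [bs.getD j 0] := by
    rw [List.take_succ, List.getElem?_eq_getElem hj, List.getD_eq_getElem _ _ hj]
    rfl
  rw [h1, run2_append]
  simp

lemma run2_take_card (bs : List ℕ) (C : Finset ℕ) (j : ℕ) (h : bs.length ≤ C.card)
    (hj : j ≤ bs.length) : (run2 (bs.take j) C).2.card = C.card - j := by
  rw [run2_card _ _ (by simp; omega)]
  simp; omega

/-- sorted list facts -/
lemma sort_getD_lt {A : Finset ℕ} {i j : ℕ} (hij : i < j) (hj : j < A.card) :
    (A.sort (· ≤ ·)).getD i 0 < (A.sort (· ≤ ·)).getD j 0 := by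
  have hlen : (A.sort (· ≤ ·)).length = A.card := Finset.length_sort _
  have hs : (A.sort (· ≤ ·)).Pairwise (· < ·) := (Finset.sortedLT_sort A).pairwise
  have hj' : j < (A.sort (· ≤ ·)).length := by omega
  have hi' : i < (A.sort (· ≤ ·)).length := by omega
  rw [List.getD_eq_getElem _ _ hi', List.getD_eq_getElem _ _ hj']
  exact List.Pairwise.rel_get_of_lt hs (by simpa using hij)

lemma mem_iff_sort_getD {A : Finset ℕ} {x : ℕ} :
    x ∈ A ↔ ∃ i < A.card, (A.sort (· ≤ ·)).getD i 0 = x := by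
  rw [← Finset.mem_sort (α := ℕ) (· ≤ ·), mem_iff_getD, Finset.length_sort]

/-- countP of a list = 1 gives a unique witness -/
lemma countP_one {α : Type*} {l : List α} {P : α → Bool} (h : l.countP P = 1) :
    ∃ p ∈ l, P p ∧ ∀ q ∈ l, P q → q = p := by
  induction l with
  | nil => simp at h
  | cons x xs ih =>
    by_cases hx : P x
    · have h0 : xs.countP P = 0 := by
        rw [List.countP_cons, if_pos hx] at h; omega
      have hall : ∀ q ∈ xs, ¬ P q := by
        intro q hq hPq
        have := List.countP_eq_zero.1 h0 q hq
        simp [hPq] at this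
      refine ⟨x, List.mem_cons_self, hx, ?_⟩
      intro q hq hPq
      rcases List.mem_cons.1 hq with rfl | hq'
      · rfl
      · exact absurd hPq (hall q hq')
    · have h1 : xs.countP P = 1 := by
        rw [List.countP_cons, if_neg hx] at h; simpa using h
      rcases ih h1 with ⟨p, hp, hPp, huniq⟩
      refine ⟨p, List.mem_cons_of_mem _ hp, hPp, ?_⟩
      intro q hq hPq
      rcases List.mem_cons.1 hq with rfl | hq'
      · exact absurd hPq hx
      · exact huniq q hq' hPq

lemma findSome?_eq_of_all {α β : Type*} (l : List α) (f : α → Option β) (v : β)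
    (hex : ∃ p ∈ l, (f p).isSome) (hval : ∀ p ∈ l, f p = none ∨ f p = some v) :
    l.findSome? f = some v := by
  induction l with
  | nil => simp at hex
  | cons x xs ih =>
    rcases hval x (List.mem_cons_self) with hn | hs
    · rw [List.findSome?_cons, hn]
      apply ih
      · rcases hex with ⟨p, hp, hps⟩
        rcases List.mem_cons.1 hp with rfl | hp'
        · rw [hn] at hps; simp at hps
        · exact ⟨p, hp', hps⟩
      · exact fun p hp => hval p (List.mem_cons_of_mem _ hp)
    · rw [List.findSome?_cons, hs]

lemma findSome?_eq_none_of_all {α β : Type*} (l : List α) (f : α → Option β)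
    (hval : ∀ p ∈ l, f p = none) : l.findSome? f = none := by
  induction l with
  | nil => simp
  | cons x xs ih =>
    rw [List.findSome?_cons, hval x (List.mem_cons_self)]
    exact ih (fun p hp => hval p (List.mem_cons_of_mem _ hp))

lemma countP_flatten_two (R : List (ℕ × ℕ × ℕ)) (P : ℕ × ℕ → Bool) :
    ((R.map fun q => [(q.1, q.2.1), (q.2.1, q.2.2)]).flatten).countP P =
      (R.map fun q => (q.1, q.2.1)).countP P + (R.map fun q => (q.2.1, q.2.2)).countP P := by
  induction R with
  | nil => simp
  | cons q R ih =>
    simp only [List.map_cons, List.flatten_cons, List.countP_append, List.countP_cons, ih]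
    simp [List.countP_cons]
    omega


/-! ### Main context: the three-row run -/

def asL (rows : ℕ → Finset ℕ) : List ℕ := (rows 1).sort (· ≤ ·)
def preB (rows : ℕ → Finset ℕ) : List (ℕ × ℕ) × Finset ℕ := run2 (asL rows) (rows 2)
def bsL (rows : ℕ → Finset ℕ) : List ℕ :=
  ((preB rows).1.map Prod.snd) ++ ((preB rows).2.sort (· ≤ ·))
def aF (rows : ℕ → Finset ℕ) (k : ℕ) : ℕ := (asL rows).getD k 0
def bF (rows : ℕ → Finset ℕ) (j : ℕ) : ℕ := (bsL rows).getD j 0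
def CstF (rows : ℕ → Finset ℕ) (j : ℕ) : Finset ℕ := (run2 ((bsL rows).take j) (rows 3)).2
def gF (rows : ℕ → Finset ℕ) (j : ℕ) : ℕ := nextEntry (CstF rows j) (bF rows j)
def BstF (rows : ℕ → Finset ℕ) (k : ℕ) : Finset ℕ :=
  (run2 ((asL rows).take k) (rows 2)).2
def stepsL (rows : ℕ → Finset ℕ) : List (ℕ × ℕ) := (run2 (bsL rows) (rows 3)).1

section Main

variable {rows : ℕ → Finset ℕ} {n s t : ℕ}

lemma asL_length (h1 : (rows 1).card = s) : (asL rows).length = s := by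
  rw [asL, Finset.length_sort, h1]

lemma bsL_length (h1 : (rows 1).card = s) (h2 : (rows 2).card = s + t) :
    (bsL rows).length = s + t := by
  rw [bsL, List.length_append, List.length_map, Finset.length_sort, preB,
    run2_length, asL_length h1, run2_card _ _ (by rw [asL_length h1, h2]; omega),
    asL_length h1, h2]
  omega

lemma preB_snd_mem (h1 : (rows 1).card = s) (h2 : (rows 2).card = s + t)
    {x : ℕ} (hx : x ∈ (preB rows).1.map Prod.snd) : x ∈ rows 2 := by
  rcases List.mem_map.1 hx with ⟨p, hp, rfl⟩
  exact run2_snd_mem _ _ (by rw [asL_length h1, h2]; omega) p hp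

lemma preB_state_mem {x : ℕ} (hx : x ∈ (preB rows).2) : x ∈ rows 2 := by
  simp only [preB] at hx
  exact ((run2_state_mem _ _ x).1 hx).1

lemma bsL_mem (h1 : (rows 1).card = s) (h2 : (rows 2).card = s + t)
    {x : ℕ} (hx : x ∈ bsL rows) : x ∈ rows 2 := by
  rcases List.mem_append.1 hx with hx | hx
  · exact preB_snd_mem h1 h2 hx
  · exact preB_state_mem (by rwa [Finset.mem_sort] at hx)

lemma bsL_nodup (h1 : (rows 1).card = s) (h2 : (rows 2).card = s + t) :
    (bsL rows).Nodup := by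
  rw [bsL, List.nodup_append]
  refine ⟨run2_snd_nodup _ _ (by rw [asL_length h1, h2]; omega), Finset.sort_nodup _ _, ?_⟩
  intro x hx y hx2 hxy
  subst hxy
  rw [Finset.mem_sort] at hx2
  simp only [preB] at hx2
  rw [run2_state_mem] at hx2
  rcases List.mem_map.1 hx with ⟨p, hp, rfl⟩
  exact hx2.2 p hp rfl

lemma bF_mem (h1 : (rows 1).card = s) (h2 : (rows 2).card = s + t)
    {j : ℕ} (hj : j < s + t) : bF rows j ∈ rows 2 := by
  apply bsL_mem h1 h2
  rw [mem_iff_getD]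
  exact ⟨j, by rw [bsL_length h1 h2]; omega, rfl⟩

lemma bF_inj (h1 : (rows 1).card = s) (h2 : (rows 2).card = s + t)
    {j j' : ℕ} (hj : j < s + t) (hj' : j' < s + t) (h : bF rows j = bF rows j') : j = j' := by
  by_contra hne
  have hlen := bsL_length (rows := rows) h1 h2
  have hnd := bsL_nodup (rows := rows) h1 h2
  have hj2 : j < (bsL rows).length := by omega
  have hj'2 : j' < (bsL rows).length := by omega
  rw [bF, bF, List.getD_eq_getElem _ _ hj2, List.getD_eq_getElem _ _ hj'2] at h
  exact hne (List.Nodup.getElem_inj_iff hnd |>.1 h)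

lemma bF_surj (h1 : (rows 1).card = s) (h2 : (rows 2).card = s + t)
    {x : ℕ} (hx : x ∈ rows 2) : ∃ j, j < s + t ∧ bF rows j = x := by
  have : x ∈ bsL rows := by
    by_cases hin : x ∈ (preB rows).1.map Prod.snd
    · exact List.mem_append.2 (Or.inl hin)
    · refine List.mem_append.2 (Or.inr ?_)
      rw [Finset.mem_sort]
      simp only [preB]
      rw [run2_state_mem]
      refine ⟨hx, fun p hp hpx => hin ?_⟩
      exact List.mem_map.2 ⟨p, hp, hpx⟩
  rw [mem_iff_getD, bsL_length h1 h2] at this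
  rcases this with ⟨i, hi, he⟩
  exact ⟨i, hi, he⟩

/-! C-side state API -/

lemma CstF_mem (h1 : (rows 1).card = s) (h2 : (rows 2).card = s + t)
    {j : ℕ} (hj : j ≤ s + t) (x : ℕ) :
    x ∈ CstF rows j ↔ x ∈ rows 3 ∧ ∀ i < j, gF rows i ≠ x := by
  rw [CstF, run2_take_state_mem _ _ _ (by rw [bsL_length h1 h2]; omega)]
  rfl

lemma CstF_card (h1 : (rows 1).card = s) (h2 : (rows 2).card = s + t)
    (h3 : (rows 3).card = n) (hmn : s + t ≤ n)
    {j : ℕ} (hj : j ≤ s + t) : (CstF rows j).card = n - j := by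
  have hA : (bsL rows).length ≤ (rows 3).card := by
    rw [bsL_length h1 h2, h3]; omega
  have hB : j ≤ (bsL rows).length := by
    rw [bsL_length h1 h2]; omega
  have := run2_take_card (bsL rows) (rows 3) j hA hB
  rw [← CstF, h3] at this
  exact this

lemma CstF_nonempty (h1 : (rows 1).card = s) (h2 : (rows 2).card = s + t)
    (h3 : (rows 3).card = n) (hmn : s + t < n)
    {j : ℕ} (hj : j ≤ s + t) : (CstF rows j).Nonempty := by
  rw [← Finset.card_pos, CstF_card h1 h2 h3 (le_of_lt hmn) hj]
  omega

lemma gF_mem (h1 : (rows 1).card = s) (h2 : (rows 2).card = s + t)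
    (h3 : (rows 3).card = n) (hmn : s + t < n)
    {j : ℕ} (hj : j < s + t) : gF rows j ∈ rows 3 ∧ ∀ i < j, gF rows i ≠ gF rows j := by
  have := nextEntry_mem (CstF_nonempty h1 h2 h3 hmn (j := j) (le_of_lt hj)) (bF rows j)
  rw [CstF_mem h1 h2 (by omega)] at this
  exact this

lemma stepsL_getD (h1 : (rows 1).card = s) (h2 : (rows 2).card = s + t)
    {j : ℕ} (hj : j < s + t) :
    (stepsL rows).getD j (0,0) = (bF rows j, gF rows j) := by
  rw [stepsL, run2_getD _ _ _ (by rw [bsL_length h1 h2]; omega)]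
  rfl

lemma stepsL_length (h1 : (rows 1).card = s) (h2 : (rows 2).card = s + t) :
    (stepsL rows).length = s + t := by
  rw [stepsL, run2_length, bsL_length h1 h2]

lemma stepsL_mem_iff (h1 : (rows 1).card = s) (h2 : (rows 2).card = s + t)
    {p : ℕ × ℕ} : p ∈ stepsL rows ↔ ∃ j, j < s + t ∧ p = (bF rows j, gF rows j) := by
  rw [stepsL, run2_mem_iff, bsL_length h1 h2]
  constructor
  · rintro ⟨j, hj, rfl⟩; exact ⟨j, hj, rfl⟩
  · rintro ⟨j, hj, rfl⟩; exact ⟨j, hj, rfl⟩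

/-! C-side dichotomy -/

lemma gF_nonwrap_min (h1 : (rows 1).card = s) (h2 : (rows 2).card = s + t)
    {j c : ℕ} (hj : j < s + t) (hc : c ∈ rows 3) (hci : ∀ i < j, gF rows i ≠ c)
    (hbc : bF rows j < c) : bF rows j < gF rows j ∧ gF rows j ≤ c := by
  have hcC : c ∈ CstF rows j := (CstF_mem h1 h2 (le_of_lt hj) c).2 ⟨hc, hci⟩
  have := nextEntry_gt hcC hbc
  exact ⟨this.1, this.2 c hcC hbc⟩

lemma gF_wrap_all (h1 : (rows 1).card = s) (h2 : (rows 2).card = s + t)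
    (hd23 : Disjoint (rows 2) (rows 3))
    {j c : ℕ} (hj : j < s + t) (hw : gF rows j < bF rows j) (hc : c ∈ rows 3)
    (hci : ∀ i < j, gF rows i ≠ c) : c < bF rows j ∧ gF rows j ≤ c := by
  have hcC : c ∈ CstF rows j := (CstF_mem h1 h2 (le_of_lt hj) c).2 ⟨hc, hci⟩
  have hall : ∀ z ∈ CstF rows j, ¬ bF rows j < z := by
    intro z hz hlt
    have := (nextEntry_gt hz hlt).1
    rw [← gF] at this
    omega
  have hne : c ≠ bF rows j := by
    intro h
    have hb : bF rows j ∈ rows 2 := bF_mem h1 h2 hj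
    rw [← h] at hb
    exact Finset.disjoint_right.1 hd23 hc hb
  have hlt : c < bF rows j := lt_of_le_of_ne (not_lt.1 (hall c hcC)) hne
  have hCne : (CstF rows j).Nonempty := ⟨c, hcC⟩
  exact ⟨hlt, nextEntry_wrap hCne hall c hcC⟩

lemma gF_ne_bF (h1 : (rows 1).card = s) (h2 : (rows 2).card = s + t)
    (h3 : (rows 3).card = n) (hmn : s + t < n) (hd23 : Disjoint (rows 2) (rows 3))
    {j : ℕ} (hj : j < s + t) : gF rows j ≠ bF rows j := by
  intro h
  have hg := (gF_mem h1 h2 h3 hmn hj).1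
  have hb := bF_mem h1 h2 hj
  rw [h] at hg
  exact Finset.disjoint_left.1 hd23 hb hg

/-! B-side phase-1 selection -/

lemma preB_length (h1 : (rows 1).card = s) : (preB rows).1.length = s := by
  rw [preB, run2_length, asL_length h1]

lemma bF_take_eq (h1 : (rows 1).card = s) {k : ℕ} (hk : k < s) :
    bF rows k = nextEntry (BstF rows k) (aF rows k) := by
  have hk1 : k < ((preB rows).1).length := by rw [preB_length h1]; omega
  have hgd : (preB rows).1.getD k (0,0) = ((asL rows).getD k 0,
      nextEntry ((run2 ((asL rows).take k) (rows 2)).2) ((asL rows).getD k 0)) := by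
    show (run2 (asL rows) (rows 2)).1.getD k (0,0) = _
    exact run2_getD _ _ _ (by rw [asL_length h1]; omega)
  have hmap : ((preB rows).1.map Prod.snd).getD k 0 = ((preB rows).1.getD k (0,0)).2 := by
    rw [List.getD_eq_getElem _ _ (by simpa using hk1), List.getD_eq_getElem _ _ hk1,
      List.getElem_map]
  rw [bF, bsL, List.getD_append _ _ _ _ (by simpa using hk1), hmap, hgd]
  rfl

lemma aF_mem (h1 : (rows 1).card = s) {k : ℕ} (hk : k < s) : aF rows k ∈ rows 1 := by
  rw [mem_iff_sort_getD]
  exact ⟨k, by omega, rfl⟩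

lemma aF_lt (h1 : (rows 1).card = s) {k k' : ℕ} (hk : k < k') (hk' : k' < s) :
    aF rows k < aF rows k' := sort_getD_lt hk (by omega)

lemma BstF_mem (h1 : (rows 1).card = s) (h2 : (rows 2).card = s + t)
    {k : ℕ} (hk : k ≤ s) (x : ℕ) :
    x ∈ BstF rows k ↔ ∃ j, k ≤ j ∧ j < s + t ∧ bF rows j = x := by
  rw [BstF, run2_take_state_mem _ _ _ (by rw [asL_length h1]; omega)]
  have hrw : ∀ i < k, nextEntry ((run2 ((asL rows).take i) (rows 2)).2) ((asL rows).getD i 0)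
      = bF rows i := by
    intro i hi
    rw [bF_take_eq h1 (by omega)]
    rfl
  constructor
  · rintro ⟨hx, hni⟩
    rcases bF_surj h1 h2 hx with ⟨j, hj, rfl⟩
    refine ⟨j, ?_, hj, rfl⟩
    by_contra hlt
    have := hni j (by omega)
    rw [hrw j (by omega)] at this
    exact this rfl
  · rintro ⟨j, hkj, hj, rfl⟩
    refine ⟨bF_mem h1 h2 hj, fun i hi => ?_⟩
    rw [hrw i hi]
    intro h
    have := bF_inj h1 h2 (by omega) hj h
    omega

lemma bF_nonwrap_min (h1 : (rows 1).card = s) (h2 : (rows 2).card = s + t)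
    {k x : ℕ} (hk : k < s) (hx : ∃ j, k ≤ j ∧ j < s + t ∧ bF rows j = x)
    (hax : aF rows k < x) : aF rows k < bF rows k ∧ bF rows k ≤ x := by
  have hxB : x ∈ BstF rows k := (BstF_mem h1 h2 (le_of_lt hk) x).2 hx
  have := nextEntry_gt hxB hax
  rw [← bF_take_eq h1 hk] at this
  exact ⟨this.1, this.2 x hxB hax⟩

lemma bF_wrap_all (h1 : (rows 1).card = s) (h2 : (rows 2).card = s + t)
    (hd12 : Disjoint (rows 1) (rows 2))
    {k x : ℕ} (hk : k < s) (hw : bF rows k < aF rows k)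
    (hx : ∃ j, k ≤ j ∧ j < s + t ∧ bF rows j = x) :
    x < aF rows k ∧ bF rows k ≤ x := by
  have hxB : x ∈ BstF rows k := (BstF_mem h1 h2 (le_of_lt hk) x).2 hx
  have hall : ∀ z ∈ BstF rows k, ¬ aF rows k < z := by
    intro z hz hlt
    have := (nextEntry_gt hz hlt).1
    rw [← bF_take_eq h1 hk] at this
    omega
  have hxr2 : x ∈ rows 2 := by
    rcases hx with ⟨j, _, hj, rfl⟩
    exact bF_mem h1 h2 hj
  have hne : x ≠ aF rows k := by
    intro h
    exact Finset.disjoint_left.1 hd12 (aF_mem h1 hk) (h ▸ hxr2)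
  have hlt : x < aF rows k := lt_of_le_of_ne (not_lt.1 (hall x hxB)) hne
  have hBne : (BstF rows k).Nonempty := ⟨x, hxB⟩
  have := nextEntry_wrap hBne hall x hxB
  rw [← bF_take_eq h1 hk] at this
  exact ⟨hlt, this⟩

lemma bF_ne_aF (h1 : (rows 1).card = s) (h2 : (rows 2).card = s + t)
    (hd12 : Disjoint (rows 1) (rows 2)) {k : ℕ} (hk : k < s) :
    bF rows k ≠ aF rows k := by
  intro h
  have hb : bF rows k ∈ rows 2 := bF_mem h1 h2 (by omega)
  exact Finset.disjoint_left.1 hd12 (aF_mem h1 hk) (h ▸ hb)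

lemma bF_sorted2 (h1 : (rows 1).card = s) (h2 : (rows 2).card = s + t)
    {j j' : ℕ} (hsj : s ≤ j) (hj : j < j') (hj' : j' < s + t) :
    bF rows j < bF rows j' := by
  have hlen : ((preB rows).1.map Prod.snd).length = s := by
    rw [List.length_map, preB_length h1]
  have hcard : ((preB rows).2).card = t := by
    have := run2_card (asL rows) (rows 2) (by rw [asL_length h1, h2]; omega)
    rw [asL_length h1, h2] at this
    rw [preB, this]
    omega
  rw [bF, bF, bsL, List.getD_append_right _ _ _ _ (by rw [hlen]; omega),
    List.getD_append_right _ _ _ _ (by rw [hlen]; omega), hlen]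
  exact sort_getD_lt (by omega) (by rw [hcard]; omega)

end Main

/-! Edge and word characterizations -/

lemma flatten_zip_pairs (l : List (ℕ × ℕ × ℕ)) :
    ((l.map fun p => [p.1, p.2.1, p.2.2]).map fun p => p.zip p.tail).flatten =
      (l.map fun q => [(q.1, q.2.1), (q.2.1, q.2.2)]).flatten := by
  induction l with
  | nil => rfl
  | cons q l ih => simp only [List.map_cons, List.flatten_cons, ih]; rfl

lemma flatten_zip_single (l : List (ℕ × ℕ)) :
    ((l.map fun p => [p.1, p.2]).map fun p => p.zip p.tail).flatten = l := by
  induction l with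
  | nil => rfl
  | cons q l ih => simp only [List.map_cons, List.flatten_cons, ih]; rfl

lemma flatten_zip_nil (l : List ℕ) :
    ((l.map fun c => [c]).map fun p => p.zip p.tail).flatten = [] := by
  induction l with
  | nil => rfl
  | cons q l ih => simp only [List.map_cons, List.flatten_cons, ih]; rfl

section Main2

variable {rows : ℕ → Finset ℕ} {n s t : ℕ}

lemma R12_e1 : (run12 (asL rows) (rows 2) (rows 3)).1.map (fun q => (q.1, q.2.1)) =
    (preB rows).1 := (run12_fst _ _ _).1

lemma R12_e2 : (run12 (asL rows) (rows 2) (rows 3)).1.map (fun q => (q.2.1, q.2.2)) =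
    (run2 ((preB rows).1.map Prod.snd) (rows 3)).1 := (run12_snd _ _ _).1

lemma R12_state : (run12 (asL rows) (rows 2) (rows 3)).2.2 =
    (run2 ((preB rows).1.map Prod.snd) (rows 3)).2 := (run12_snd _ _ _).2

lemma R12_state1 : (run12 (asL rows) (rows 2) (rows 3)).2.1 = (preB rows).2 :=
  (run12_fst _ _ _).2

lemma stepsL_split : stepsL rows = (run2 ((preB rows).1.map Prod.snd) (rows 3)).1 ++
    (run2 ((preB rows).2.sort (· ≤ ·))
      ((run2 ((preB rows).1.map Prod.snd) (rows 3)).2)).1 := by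
  rw [stepsL, bsL, run2_append]

lemma stepsL_state : (run2 (bsL rows) (rows 3)).2 =
    (run2 ((preB rows).2.sort (· ≤ ·))
      ((run2 ((preB rows).1.map Prod.snd) (rows 3)).2)).2 := by
  rw [bsL, run2_append]

lemma edgesOf_eq : edgesOf 3 rows =
    ((run12 (asL rows) (rows 2) (rows 3)).1.map
      (fun q => [(q.1, q.2.1), (q.2.1, q.2.2)])).flatten ++
    (run2 ((preB rows).2.sort (· ≤ ·))
      ((run2 ((preB rows).1.map Prod.snd) (rows 3)).2)).1 := by
  unfold edgesOf
  rw [pathsOf_three, List.map_append, List.map_append, List.flatten_append,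
    List.flatten_append, flatten_zip_pairs, flatten_zip_single, flatten_zip_nil,
    List.append_nil, (run12_snd ((rows 1).sort (· ≤ ·)) (rows 2) (rows 3)).2,
    (run12_fst ((rows 1).sort (· ≤ ·)) (rows 2) (rows 3)).2]
  rfl

lemma preB_mem_iff (h1 : (rows 1).card = s) {x y : ℕ} :
    (x, y) ∈ (preB rows).1 ↔ ∃ k, k < s ∧ x = aF rows k ∧ y = bF rows k := by
  show (x, y) ∈ (run2 (asL rows) (rows 2)).1 ↔ _
  rw [run2_mem_iff, asL_length h1]
  constructor
  · rintro ⟨k, hk, heq⟩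
    have hx : x = (asL rows).getD k 0 := congrArg Prod.fst heq
    have hy : y = nextEntry ((run2 ((asL rows).take k) (rows 2)).2) ((asL rows).getD k 0) :=
      congrArg Prod.snd heq
    refine ⟨k, hk, hx, ?_⟩
    rw [hy, bF_take_eq h1 hk]
    rfl
  · rintro ⟨k, hk, rfl, rfl⟩
    refine ⟨k, hk, ?_⟩
    rw [bF_take_eq h1 hk]
    rfl

lemma bs1_take (h1 : (rows 1).card = s) {j : ℕ} (hj : j ≤ s) :
    ((preB rows).1.map Prod.snd).take j = (bsL rows).take j := by
  have hlen : ((preB rows).1.map Prod.snd).length = s := by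
    rw [List.length_map, preB_length h1]
  have h0 : j - ((preB rows).1.map Prod.snd).length = 0 := by rw [hlen]; omega
  rw [bsL, List.take_append, h0, List.take_zero, List.append_nil]

lemma run2_bs1_mem_iff (h1 : (rows 1).card = s) (h2 : (rows 2).card = s + t) {p : ℕ × ℕ} :
    p ∈ (run2 ((preB rows).1.map Prod.snd) (rows 3)).1 ↔
      ∃ j, j < s ∧ p = (bF rows j, gF rows j) := by
  rw [run2_mem_iff]
  have hlen : ((preB rows).1.map Prod.snd).length = s := by
    rw [List.length_map, preB_length h1]
  rw [hlen]
  have hconv : ∀ j < s, ((preB rows).1.map Prod.snd).getD j 0 = bF rows j := by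
    intro j hj
    rw [bF, bsL, List.getD_append _ _ _ _ (by rw [hlen]; omega)]
  have hconv2 : ∀ j < s, (run2 (((preB rows).1.map Prod.snd).take j) (rows 3)).2
      = CstF rows j := by
    intro j hj
    rw [CstF, bs1_take h1 (le_of_lt hj)]
  constructor
  · rintro ⟨j, hj, rfl⟩
    exact ⟨j, hj, by rw [hconv j hj, hconv2 j hj]; rfl⟩
  · rintro ⟨j, hj, rfl⟩
    exact ⟨j, hj, by rw [hconv j hj, hconv2 j hj]; rfl⟩

lemma edge_mem (h1 : (rows 1).card = s) {x y : ℕ} :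
    (x, y) ∈ edgesOf 3 rows ↔
      ((x, y) ∈ (preB rows).1 ∨ (x, y) ∈ stepsL rows) := by
  rw [edgesOf_eq, stepsL_split, List.mem_append, List.mem_append, List.mem_flatten]
  constructor
  · rintro (⟨l, hl, hxy⟩ | h2)
    · rcases List.mem_map.1 hl with ⟨q, hq, rfl⟩
      rcases List.mem_cons.1 hxy with he | hxy2
      · refine Or.inl ?_
        rw [he, ← R12_e1 (rows := rows)]
        exact List.mem_map.2 ⟨q, hq, rfl⟩
      · rcases List.mem_cons.1 hxy2 with he | hxy3
        · refine Or.inr (Or.inl ?_)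
          rw [he, ← R12_e2 (rows := rows)]
          exact List.mem_map.2 ⟨q, hq, rfl⟩
        · simp at hxy3
    · exact Or.inr (Or.inr h2)
  · rintro (h | h | h)
    · rw [← R12_e1 (rows := rows)] at h
      rcases List.mem_map.1 h with ⟨q, hq, he⟩
      refine Or.inl ⟨[(q.1, q.2.1), (q.2.1, q.2.2)], List.mem_map.2 ⟨q, hq, rfl⟩, ?_⟩
      rw [← he]
      exact List.mem_cons_self
    · rw [← R12_e2 (rows := rows)] at h
      rcases List.mem_map.1 h with ⟨q, hq, he⟩
      refine Or.inl ⟨[(q.1, q.2.1), (q.2.1, q.2.2)], List.mem_map.2 ⟨q, hq, rfl⟩, ?_⟩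
      rw [← he]
      exact List.mem_cons_of_mem _ (List.mem_cons_self)
    · exact Or.inr h

lemma edge_mem_iff (h1 : (rows 1).card = s) (h2 : (rows 2).card = s + t) {x y : ℕ} :
    (x, y) ∈ edgesOf 3 rows ↔
      ((∃ k, k < s ∧ x = aF rows k ∧ y = bF rows k) ∨
        (∃ j, j < s + t ∧ x = bF rows j ∧ y = gF rows j)) := by
  rw [edge_mem h1, preB_mem_iff h1, stepsL_mem_iff h1 h2]
  constructor
  · rintro (h | ⟨j, hj, heq⟩)
    · exact Or.inl h
    · rw [Prod.ext_iff] at heq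
      exact Or.inr ⟨j, hj, heq.1, heq.2⟩
  · rintro (h | ⟨j, hj, hx, hy⟩)
    · exact Or.inl h
    · exact Or.inr ⟨j, hj, by rw [Prod.ext_iff]; exact ⟨hx, hy⟩⟩

lemma wrapCount_eq (h1 : (rows 1).card = s) (h2 : (rows 2).card = s + t)
    (hd12 : Disjoint (rows 1) (rows 2)) :
    wrapCount 3 rows 2 = (stepsL rows).countP (fun p => decide (p.2 < p.1)) := by
  unfold wrapCount
  rw [edgesOf_eq, List.countP_append, countP_flatten_two]
  have hz : ((run12 (asL rows) (rows 2) (rows 3)).1.map fun q => (q.1, q.2.1)).countP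
      (fun e => decide (e.2 < e.1 ∧ e.1 ∈ rows 2)) = 0 := by
    apply List.countP_eq_zero.2
    intro e he
    rw [R12_e1 (rows := rows)] at he
    have : e.1 ∈ rows 1 := by
      have hfst : e.1 ∈ (preB rows).1.map Prod.fst := List.mem_map.2 ⟨e, he, rfl⟩
      rw [preB, run2_fst_map] at hfst
      rw [asL, Finset.mem_sort] at hfst
      exact hfst
    have hnot : e.1 ∉ rows 2 := Finset.disjoint_left.1 hd12 this
    simp [hnot]
  rw [hz, zero_add, R12_e2 (rows := rows), ← List.countP_append, ← stepsL_split]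
  apply List.countP_congr
  intro p hp
  rcases (stepsL_mem_iff h1 h2).1 hp with ⟨j, hj, rfl⟩
  have : bF rows j ∈ rows 2 := bF_mem h1 h2 hj
  simp [this]

end Main2

/-! Entry (sorted position) lemmas -/

section EntryLemmas

variable {rows : ℕ → Finset ℕ}

lemma entry_mem' {i k : ℕ} (hk : 1 ≤ k) (hk2 : k ≤ (rows i).card) :
    entry rows i k ∈ rows i := by
  rw [mem_iff_sort_getD]
  exact ⟨k - 1, by omega, rfl⟩

lemma entry_lt' {i k k' : ℕ} (h1k : 1 ≤ k) (hkk' : k < k') (hk' : k' ≤ (rows i).card) :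
    entry rows i k < entry rows i k' := by
  unfold entry
  exact sort_getD_lt (by omega) (by omega)

lemma entry_one_min {i : ℕ} {x : ℕ} (hx : x ∈ rows i) : entry rows i 1 ≤ x := by
  rcases mem_iff_sort_getD.1 hx with ⟨ix, hix, rfl⟩
  rcases Nat.eq_zero_or_pos ix with rfl | hpos
  · exact le_refl _
  · exact le_of_lt (sort_getD_lt (by omega) hix)

lemma le_entry_card' {i : ℕ} {x : ℕ} (hx : x ∈ rows i) : x ≤ entry rows i (rows i).card := by
  rcases mem_iff_sort_getD.1 hx with ⟨ix, hix, rfl⟩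
  rcases Nat.lt_or_ge ix ((rows i).card - 1) with hlt | hge
  · exact le_of_lt (sort_getD_lt hlt (by omega))
  · have : ix = (rows i).card - 1 := by omega
    rw [this]
    exact le_refl _

lemma eq_entry_one_of_lt_two {i : ℕ} {x : ℕ} (hx : x ∈ rows i)
    (hlt : x < entry rows i 2) : x = entry rows i 1 := by
  rw [entry, show (2:ℕ) - 1 = 1 from rfl] at hlt
  rcases mem_iff_sort_getD.1 hx with ⟨ix, hix, rfl⟩
  rcases Nat.eq_zero_or_pos ix with rfl | hpos
  · rfl
  · exfalso
    rcases Nat.lt_or_ge 1 ix with h1 | h1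
    · exact absurd (sort_getD_lt (show 1 < ix by omega) hix) (by omega)
    · have h1' : ix = 1 := by omega
      rw [h1'] at hlt
      omega

lemma le_entry_pred' {i : ℕ} {x : ℕ} (hx : x ∈ rows i) (hcard : 2 ≤ (rows i).card)
    (hne : x ≠ entry rows i (rows i).card) : x ≤ entry rows i ((rows i).card - 1) := by
  rcases mem_iff_sort_getD.1 hx with ⟨ix, hix, rfl⟩
  have hne2 : ix ≠ (rows i).card - 1 := by
    intro h
    exact hne (by rw [entry, h])
  rcases Nat.lt_or_ge ix ((rows i).card - 2) with hlt | hge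
  · exact le_of_lt (sort_getD_lt (show ix < (rows i).card - 1 - 1 by omega) (by omega))
  · have : ix = (rows i).card - 2 := by omega
    rw [this]
    have : (rows i).card - 1 - 1 = (rows i).card - 2 := by omega
    rw [entry, this]

end EntryLemmas

section Main3

variable {rows : ℕ → Finset ℕ} {n s t : ℕ}

lemma preB_state_card (h1 : (rows 1).card = s) (h2 : (rows 2).card = s + t) :
    ((preB rows).2).card = t := by
  have := run2_card (asL rows) (rows 2) (by rw [asL_length h1, h2]; omega)
  rw [asL_length h1, h2] at this
  rw [preB, this]
  omega

lemma run2_bs2_getD (h1 : (rows 1).card = s) (h2 : (rows 2).card = s + t)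
    {i : ℕ} (hi : i < t) :
    (run2 ((preB rows).2.sort (· ≤ ·))
      ((run2 ((preB rows).1.map Prod.snd) (rows 3)).2)).1.getD i (0,0)
    = (bF rows (s + i), gF rows (s + i)) := by
  have hlen : ((run2 ((preB rows).1.map Prod.snd) (rows 3)).1).length = s := by
    rw [run2_length, List.length_map, preB_length h1]
  have := stepsL_getD h1 h2 (j := s + i) (by omega)
  rw [stepsL_split (rows := rows)] at this
  rw [List.getD_append_right _ _ _ _ (by rw [hlen]; omega), hlen] at this
  simpa using this

lemma run2_bs2_mem_iff (h1 : (rows 1).card = s) (h2 : (rows 2).card = s + t)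
    {p : ℕ × ℕ} :
    p ∈ (run2 ((preB rows).2.sort (· ≤ ·))
      ((run2 ((preB rows).1.map Prod.snd) (rows 3)).2)).1 ↔
    ∃ j, s ≤ j ∧ j < s + t ∧ p = (bF rows j, gF rows j) := by
  have hlen : ((run2 ((preB rows).2.sort (· ≤ ·))
      ((run2 ((preB rows).1.map Prod.snd) (rows 3)).2)).1).length = t := by
    rw [run2_length, Finset.length_sort, preB_state_card h1 h2]
  rw [mem_iff_getD', hlen]
  constructor
  · rintro ⟨i, hi, he⟩
    rw [run2_bs2_getD h1 h2 hi] at he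
    exact ⟨s + i, by omega, by omega, he.symm⟩
  · rintro ⟨j, hsj, hj, rfl⟩
    refine ⟨j - s, by omega, ?_⟩
    rw [run2_bs2_getD h1 h2 (by omega)]
    have : s + (j - s) = j := by omega
    rw [this]

/-! word characterization -/

lemma getLast?_triple (x y z : ℕ) : ([x, y, z] : List ℕ).getLast? = some z := rfl
lemma getLast?_pair (x y : ℕ) : ([x, y] : List ℕ).getLast? = some y := rfl
lemma getLast?_single (x : ℕ) : ([x] : List ℕ).getLast? = some x := rfl

lemma wordOf_eq_one_iff (h1 : (rows 1).card = s) (h2 : (rows 2).card = s + t) (a : ℕ) :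
    wordOf 3 rows a = 1 ↔ ∃ j, j < s ∧ gF rows j = entry rows 3 a := by
  unfold wordOf
  set c := entry rows 3 a with hcdef
  set f : List ℕ → Option ℕ :=
    fun p => if p.getLast? = some c then some (3 + 1 - p.length) else none with hfdef
  set P1 := (run12 (asL rows) (rows 2) (rows 3)).1.map (fun p => [p.1, p.2.1, p.2.2]) with hP1def
  set P2 := (run2 (((run12 (asL rows) (rows 2) (rows 3)).2.1).sort (· ≤ ·))
      ((run12 (asL rows) (rows 2) (rows 3)).2.2)).1.map (fun p => [p.1, p.2]) with hP2def
  set P3 := (((run2 (((run12 (asL rows) (rows 2) (rows 3)).2.1).sort (· ≤ ·))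
      ((run12 (asL rows) (rows 2) (rows 3)).2.2)).2).sort (· ≤ ·)).map
      (fun c => ([c] : List ℕ)) with hP3def
  have hsplit : pathsOf 3 rows = P1 ++ P2 ++ P3 := pathsOf_three rows
  rw [hsplit, List.findSome?_append, List.findSome?_append]
  have hfP1 : ∀ q ∈ (run12 (asL rows) (rows 2) (rows 3)).1,
      f [q.1, q.2.1, q.2.2] = if q.2.2 = c then some 1 else none := by
    intro q hq
    simp only [hfdef]
    by_cases h : q.2.2 = c
    · rw [if_pos h, if_pos (by rw [getLast?_triple, h])]
      rfl
    · rw [if_neg h, if_neg (by rw [getLast?_triple]; simpa using h)]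
  have hP1c : (∃ q ∈ (run12 (asL rows) (rows 2) (rows 3)).1, q.2.2 = c) ↔
      ∃ j, j < s ∧ gF rows j = c := by
    constructor
    · rintro ⟨q, hq, hqc⟩
      have hmm : (q.2.1, q.2.2) ∈ (run2 ((preB rows).1.map Prod.snd) (rows 3)).1 := by
        rw [← R12_e2 (rows := rows)]
        exact List.mem_map.2 ⟨q, hq, rfl⟩
      rcases (run2_bs1_mem_iff h1 h2).1 hmm with ⟨j, hj, he⟩
      exact ⟨j, hj, (congrArg Prod.snd he).symm.trans hqc⟩
    · rintro ⟨j, hj, hgj⟩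
      have hmm : (bF rows j, gF rows j) ∈ (run2 ((preB rows).1.map Prod.snd) (rows 3)).1 :=
        (run2_bs1_mem_iff h1 h2).2 ⟨j, hj, rfl⟩
      rw [← R12_e2 (rows := rows)] at hmm
      rcases List.mem_map.1 hmm with ⟨q, hq, he⟩
      exact ⟨q, hq, (congrArg Prod.snd he).trans hgj⟩
  have hval1 : ∀ p ∈ P1, f p = none ∨ f p = some 1 := by
    intro p hp
    rcases List.mem_map.1 hp with ⟨q, hq, rfl⟩
    rw [hfP1 q hq]
    by_cases h : q.2.2 = c
    · exact Or.inr (by rw [if_pos h])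
    · exact Or.inl (by rw [if_neg h])
  have hfP2 : ∀ q : ℕ × ℕ, f [q.1, q.2] = if q.2 = c then some 2 else none := by
    intro q
    simp only [hfdef]
    by_cases h : q.2 = c
    · rw [if_pos h, if_pos (by rw [getLast?_pair, h])]
      rfl
    · rw [if_neg h, if_neg (by rw [getLast?_pair]; simpa using h)]
  have hfP3 : ∀ q : ℕ, f [q] = if q = c then some 3 else none := by
    intro q
    simp only [hfdef]
    by_cases h : q = c
    · rw [if_pos h, if_pos (by rw [getLast?_single, h])]
      rfl
    · rw [if_neg h, if_neg (by rw [getLast?_single]; simpa using h)]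
  have hval2 : ∀ p ∈ P2, f p = none ∨ f p = some 2 := by
    intro p hp
    rcases List.mem_map.1 hp with ⟨q, hq, rfl⟩
    rw [hfP2 q]
    by_cases h : q.2 = c
    · exact Or.inr (by rw [if_pos h])
    · exact Or.inl (by rw [if_neg h])
  have hval3 : ∀ p ∈ P3, f p = none ∨ f p = some 3 := by
    intro p hp
    rcases List.mem_map.1 hp with ⟨q, hq, rfl⟩
    rw [hfP3 q]
    by_cases h : q = c
    · exact Or.inr (by rw [if_pos h])
    · exact Or.inl (by rw [if_neg h])
  constructor
  · intro hw
    by_contra hno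
    push_neg at hno
    have hnone1 : P1.findSome? f = none := by
      apply findSome?_eq_none_of_all
      intro p hp
      rcases List.mem_map.1 hp with ⟨q, hq, rfl⟩
      rw [hfP1 q hq, if_neg]
      intro hqc
      rcases hP1c.1 ⟨q, hq, hqc⟩ with ⟨j, hj, hgj⟩
      exact absurd hgj (hno j hj)
    rw [hnone1] at hw
    simp only [Option.none_or] at hw
    rcases h2o : P2.findSome? f with _ | v2
    · rcases h3o : P3.findSome? f with _ | v3
      · rw [h2o, h3o] at hw
        simp at hw
      · rcases List.exists_of_findSome?_eq_some h3o with ⟨p, hp, hfp⟩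
        rcases hval3 p hp with hn | hs3
        · rw [hn] at hfp; simp at hfp
        · rw [hfp] at hs3
          have hv3 : v3 = 3 := Option.some_inj.1 hs3
          rw [h2o, h3o, hv3] at hw
          simp at hw
    · rcases List.exists_of_findSome?_eq_some h2o with ⟨p, hp, hfp⟩
      rcases hval2 p hp with hn | hs2
      · rw [hn] at hfp; simp at hfp
      · rw [hfp] at hs2
        have hv2 : v2 = 2 := Option.some_inj.1 hs2
        rw [h2o, hv2] at hw
        simp at hw
  · rintro ⟨j, hj, hgj⟩
    have hsome1 : P1.findSome? f = some 1 := by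
      apply findSome?_eq_of_all _ _ _ _ hval1
      rcases hP1c.2 ⟨j, hj, hgj⟩ with ⟨q, hq, hqc⟩
      refine ⟨[q.1, q.2.1, q.2.2], List.mem_map.2 ⟨q, hq, rfl⟩, ?_⟩
      rw [hfP1 q hq, if_pos hqc]
      simp
    rw [hsome1]
    rfl

lemma wordOf_eq_three_iff (h1 : (rows 1).card = s) (h2 : (rows 2).card = s + t)
    (a : ℕ) (hca : entry rows 3 a ∈ rows 3) :
    wordOf 3 rows a = 3 ↔ ∀ j, j < s + t → gF rows j ≠ entry rows 3 a := by
  unfold wordOf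
  set c := entry rows 3 a with hcdef
  set f : List ℕ → Option ℕ :=
    fun p => if p.getLast? = some c then some (3 + 1 - p.length) else none with hfdef
  set P1 := (run12 (asL rows) (rows 2) (rows 3)).1.map (fun p => [p.1, p.2.1, p.2.2]) with hP1def
  set P2 := (run2 (((run12 (asL rows) (rows 2) (rows 3)).2.1).sort (· ≤ ·))
      ((run12 (asL rows) (rows 2) (rows 3)).2.2)).1.map (fun p => [p.1, p.2]) with hP2def
  set P3 := (((run2 (((run12 (asL rows) (rows 2) (rows 3)).2.1).sort (· ≤ ·))
      ((run12 (asL rows) (rows 2) (rows 3)).2.2)).2).sort (· ≤ ·)).map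
      (fun c => ([c] : List ℕ)) with hP3def
  have hsplit : pathsOf 3 rows = P1 ++ P2 ++ P3 := pathsOf_three rows
  rw [hsplit, List.findSome?_append, List.findSome?_append]
  have hfP1 : ∀ q ∈ (run12 (asL rows) (rows 2) (rows 3)).1,
      f [q.1, q.2.1, q.2.2] = if q.2.2 = c then some 1 else none := by
    intro q hq
    simp only [hfdef]
    by_cases h : q.2.2 = c
    · rw [if_pos h, if_pos (by rw [getLast?_triple, h])]
      rfl
    · rw [if_neg h, if_neg (by rw [getLast?_triple]; simpa using h)]
  have hP2eq : P2 = (run2 ((preB rows).2.sort (· ≤ ·))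
      ((run2 ((preB rows).1.map Prod.snd) (rows 3)).2)).1.map (fun p => [p.1, p.2]) := by
    rw [hP2def, (run12_snd (asL rows) (rows 2) (rows 3)).2,
      (run12_fst (asL rows) (rows 2) (rows 3)).2]
    rfl
  have hfP2 : ∀ q : ℕ × ℕ, f [q.1, q.2] = if q.2 = c then some 2 else none := by
    intro q
    simp only [hfdef]
    by_cases h : q.2 = c
    · rw [if_pos h, if_pos (by rw [getLast?_pair, h])]
      rfl
    · rw [if_neg h, if_neg (by rw [getLast?_pair]; simpa using h)]
  have hfP3 : ∀ q : ℕ, f [q] = if q = c then some 3 else none := by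
    intro q
    simp only [hfdef]
    by_cases h : q = c
    · rw [if_pos h, if_pos (by rw [getLast?_single, h])]
      rfl
    · rw [if_neg h, if_neg (by rw [getLast?_single]; simpa using h)]
  constructor
  · intro hw j hj hgj
    rcases Nat.lt_or_ge j s with hjs | hjs
    · -- match in P1 gives word ∈ {1}
      have hmm : (bF rows j, gF rows j) ∈ (run2 ((preB rows).1.map Prod.snd) (rows 3)).1 :=
        (run2_bs1_mem_iff h1 h2).2 ⟨j, hjs, rfl⟩
      rw [← R12_e2 (rows := rows)] at hmm
      rcases List.mem_map.1 hmm with ⟨q, hq, he⟩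
      have hsome1 : P1.findSome? f = some 1 := by
        apply findSome?_eq_of_all
        · refine ⟨[q.1, q.2.1, q.2.2], List.mem_map.2 ⟨q, hq, rfl⟩, ?_⟩
          rw [hfP1 q hq, if_pos ((congrArg Prod.snd he).trans hgj)]
          simp
        · intro p hp
          rcases List.mem_map.1 hp with ⟨q', hq', rfl⟩
          rw [hfP1 q' hq']
          by_cases h : q'.2.2 = c
          · exact Or.inr (by rw [if_pos h])
          · exact Or.inl (by rw [if_neg h])
      rw [hsome1] at hw
      simp at hw
    · -- j ≥ s: match in P2; word is 1 or 2 in any case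
      rcases h1o : P1.findSome? f with _ | v1
      · have hmm : (bF rows j, gF rows j) ∈ (run2 ((preB rows).2.sort (· ≤ ·))
            ((run2 ((preB rows).1.map Prod.snd) (rows 3)).2)).1 :=
          (run2_bs2_mem_iff h1 h2).2 ⟨j, hjs, hj, rfl⟩
        have hsome2 : P2.findSome? f = some 2 := by
          rw [hP2eq]
          apply findSome?_eq_of_all
          · refine ⟨[(bF rows j, gF rows j).1, (bF rows j, gF rows j).2],
              List.mem_map.2 ⟨_, hmm, rfl⟩, ?_⟩
            rw [hfP2, if_pos hgj]
            simp
          · intro p hp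
            rcases List.mem_map.1 hp with ⟨q', hq', rfl⟩
            rw [hfP2 q']
            by_cases h : q'.2 = c
            · exact Or.inr (by rw [if_pos h])
            · exact Or.inl (by rw [if_neg h])
        rw [h1o, hsome2] at hw
        simp at hw
      · rcases List.exists_of_findSome?_eq_some h1o with ⟨p, hp, hfp⟩
        rcases List.mem_map.1 hp with ⟨q', hq', rfl⟩
        rw [hfP1 q' hq'] at hfp
        by_cases h : q'.2.2 = c
        · rw [if_pos h] at hfp
          have hv1 : v1 = 1 := (Option.some_inj.1 hfp).symm
          rw [h1o, hv1] at hw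
          simp at hw
        · rw [if_neg h] at hfp
          simp at hfp
  · intro hall
    have hnone1 : P1.findSome? f = none := by
      apply findSome?_eq_none_of_all
      intro p hp
      rcases List.mem_map.1 hp with ⟨q, hq, rfl⟩
      rw [hfP1 q hq, if_neg]
      intro hqc
      have hmm : (q.2.1, q.2.2) ∈ (run2 ((preB rows).1.map Prod.snd) (rows 3)).1 := by
        rw [← R12_e2 (rows := rows)]
        exact List.mem_map.2 ⟨q, hq, rfl⟩
      rcases (run2_bs1_mem_iff h1 h2).1 hmm with ⟨j, hj, he⟩
      exact hall j (by omega) ((congrArg Prod.snd he).symm.trans hqc)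
    have hnone2 : P2.findSome? f = none := by
      rw [hP2eq]
      apply findSome?_eq_none_of_all
      intro p hp
      rcases List.mem_map.1 hp with ⟨q, hq, rfl⟩
      rw [hfP2 q, if_neg]
      intro hqc
      rcases (run2_bs2_mem_iff h1 h2).1 hq with ⟨j, hsj, hj, he⟩
      exact hall j hj ((congrArg Prod.snd he).symm.trans hqc)
    have hcC : c ∈ (run2 (((run12 (asL rows) (rows 2) (rows 3)).2.1).sort (· ≤ ·))
        ((run12 (asL rows) (rows 2) (rows 3)).2.2)).2 := by
      rw [(run12_snd (asL rows) (rows 2) (rows 3)).2,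
        (run12_fst (asL rows) (rows 2) (rows 3)).2]
      show c ∈ (run2 ((preB rows).2.sort (· ≤ ·))
        ((run2 ((preB rows).1.map Prod.snd) (rows 3)).2)).2
      rw [← stepsL_state, run2_state_mem]
      refine ⟨hca, fun p hp => ?_⟩
      rcases (stepsL_mem_iff h1 h2).1 hp with ⟨j, hj, rfl⟩
      exact hall j hj
    have hsome3 : P3.findSome? f = some 3 := by
      apply findSome?_eq_of_all
      · refine ⟨[c], List.mem_map.2 ⟨c, by rw [Finset.mem_sort]; exact hcC, rfl⟩, ?_⟩
        rw [hfP3, if_pos rfl]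
        simp
      · intro p hp
        rcases List.mem_map.1 hp with ⟨q, hq, rfl⟩
        rw [hfP3 q]
        by_cases h : q = c
        · exact Or.inr (by rw [if_pos h])
        · exact Or.inl (by rw [if_neg h])
    rw [hnone1, hnone2, hsome3]
    rfl

end Main3

/-! arithmetic of the type `m3` -/

lemma S_m3_one (s t u : ℕ) : S (m3 s t u) 1 = s := by
  rw [S, Finset.Icc_self, Finset.sum_singleton]
  rfl

lemma S_m3_two (s t u : ℕ) : S (m3 s t u) 2 = s + t := by
  rw [S, show (2:ℕ) = 1 + 1 from rfl, Finset.sum_Icc_succ_top (by omega), ← S, S_m3_one]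
  rfl

lemma S_m3_three (s t u : ℕ) : S (m3 s t u) 3 = s + t + u := by
  rw [S, show (3:ℕ) = 2 + 1 from rfl, Finset.sum_Icc_succ_top (by omega), ← S, S_m3_two]
  rfl

lemma Ntot_m3 (s t u : ℕ) : Ntot 3 (m3 s t u) = s + (s + t) + (s + t + u) := by
  rw [Ntot, show (3:ℕ) = 2 + 1 from rfl, Finset.sum_Icc_succ_top (by omega),
    show (2:ℕ) = 1 + 1 from rfl, Finset.sum_Icc_succ_top (by omega), Finset.Icc_self,
    Finset.sum_singleton, S_m3_one, ← show (2:ℕ) = 1 + 1 from rfl, S_m3_two,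
    ← show (3:ℕ) = 2 + 1 from rfl, S_m3_three]

lemma aF_inj {rows : ℕ → Finset ℕ} {s : ℕ} (h1 : (rows 1).card = s) {k k' : ℕ}
    (hk : k < s) (hk' : k' < s) (h : aF rows k = aF rows k') : k = k' := by
  rcases Nat.lt_trichotomy k k' with hlt | heq | hgt
  · exact absurd h (Nat.ne_of_lt (aF_lt h1 hlt hk'))
  · exact heq
  · exact absurd h.symm (Nat.ne_of_lt (aF_lt h1 hgt hk))



theorem word13_onewrap_characterization (n s t : ℕ) (hs : 1 ≤ s) (ht : 1 ≤ t)
    (hstn : s + t < n) (rows : ℕ → Finset ℕ)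
    (hpl : IsPlacement 3 (m3 s t (n - s - t)) rows)
    (hN : (n + 2 * s + t) ∈ rows 3) (hwrap : wrapCount 3 rows 2 = 1) :
    (wordOf 3 rows 1 = 1 ∧ wordOf 3 rows 2 = 3) ↔
      ((∃ i, 1 ≤ i ∧ i < s ∧
          Bullies 3 rows (entry rows 1 i) (entry rows 2 (s + t - 1)) ∧
          Bullies 3 rows (entry rows 2 (s + t - 1)) (entry rows 3 n) ∧
          Bullies 3 rows (entry rows 1 (i + 1)) (entry rows 2 (s + t)) ∧
          WrapBullies 3 rows (entry rows 2 (s + t)) (entry rows 3 1)) ∧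
        entry rows 3 2 < entry rows 2 1) := by
  obtain ⟨hcards, -, hdisjf, hunion⟩ := hpl
  have h1 : (rows 1).card = s := by
    have h := hcards 1 (by decide)
    rwa [S_m3_one] at h
  have h2 : (rows 2).card = s + t := by
    have h := hcards 2 (by decide)
    rwa [S_m3_two] at h
  have h3 : (rows 3).card = n := by
    have h := hcards 3 (by decide)
    rw [S_m3_three] at h
    rw [h]
    omega
  have hd12 : Disjoint (rows 1) (rows 2) := hdisjf 1 2 (by omega)
  have hd13 : Disjoint (rows 1) (rows 3) := hdisjf 1 3 (by omega)
  have hd23 : Disjoint (rows 2) (rows 3) := hdisjf 2 3 (by omega)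
  have hmn : s + t < n := hstn
  -- upper bound by N for all entries
  have hub : ∀ i, i ∈ Finset.Icc 1 3 → ∀ x ∈ rows i, x ≤ n + 2*s + t := by
    intro i hi x hx
    have hx2 : x ∈ (Finset.Icc 1 3).biUnion rows := Finset.mem_biUnion.2 ⟨i, hi, hx⟩
    rw [hunion, Finset.mem_Icc] at hx2
    have hNtot : Ntot 3 (m3 s t (n - s - t)) = n + 2*s + t := by
      rw [Ntot_m3]; omega
    omega
  -- entry basics
  have hc1mem : entry rows 3 1 ∈ rows 3 := entry_mem' (by omega) (by rw [h3]; omega)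
  have hc2mem : entry rows 3 2 ∈ rows 3 := entry_mem' (by omega) (by rw [h3]; omega)
  have hc12 : entry rows 3 1 < entry rows 3 2 := entry_lt' (by omega) (by omega) (by rw [h3]; omega)
  have hcnmem : entry rows 3 n ∈ rows 3 := entry_mem' (by omega) (by rw [h3])
  have hcn : entry rows 3 n = n + 2*s + t := by
    apply le_antisymm (hub 3 (by decide) _ hcnmem)
    have := le_entry_card' hN
    rwa [h3] at this
  have hle2 : ∀ x ∈ rows 2, x ≤ entry rows 2 (s + t) := by
    intro x hx
    have := le_entry_card' hx
    rwa [h2] at this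
  have hbm_mem : entry rows 2 (s+t) ∈ rows 2 := entry_mem' (by omega) (by rw [h2])
  have hbm1mem : entry rows 2 (s+t-1) ∈ rows 2 := entry_mem' (by omega) (by rw [h2]; omega)
  have hb1mem : entry rows 2 1 ∈ rows 2 := entry_mem' (by omega) (by rw [h2]; omega)
  -- the unique wrap step j₀
  rw [wrapCount_eq h1 h2 hd12] at hwrap
  obtain ⟨p, hpmem, hPp, huniq⟩ := countP_one hwrap
  obtain ⟨j₀, hj₀m, rfl⟩ := (stepsL_mem_iff h1 h2).1 hpmem
  have hwrap₀ : gF rows j₀ < bF rows j₀ := by simpa using hPp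
  have huniq' : ∀ j, j < s + t → gF rows j < bF rows j → j = j₀ := by
    intro j hj hlt
    have h := huniq (bF rows j, gF rows j) ((stepsL_mem_iff h1 h2).2 ⟨j, hj, rfl⟩)
      (by simpa using hlt)
    exact bF_inj h1 h2 hj hj₀m (congrArg Prod.fst h)
  have hnw : ∀ j, j < s + t → j ≠ j₀ → bF rows j < gF rows j := by
    intro j hj hne
    rcases Nat.lt_trichotomy (bF rows j) (gF rows j) with h | h | h
    · exact h
    · exact absurd h.symm (gF_ne_bF h1 h2 h3 hmn hd23 hj)
    · exact absurd (huniq' j hj h) hne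
  have hgmem : ∀ j, j < s+t → gF rows j ∈ rows 3 := fun j hj => (gF_mem h1 h2 h3 hmn hj).1
  have hginj : ∀ i j, i < j → j < s + t → gF rows i ≠ gF rows j :=
    fun i j hij hj => fun h => (gF_mem h1 h2 h3 hmn hj).2 i hij h
  have hne23 : ∀ x ∈ rows 2, ∀ y ∈ rows 3, x ≠ y := by
    intro x hx y hy h
    exact Finset.disjoint_left.1 hd23 hx (h ▸ hy)
  constructor
  · -- FORWARD DIRECTION
    rintro ⟨hw1, hw2⟩
    obtain ⟨j₁, hj₁s, hgj₁⟩ := (wordOf_eq_one_iff h1 h2 1).1 hw1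
    have hall2 : ∀ j, j < s + t → gF rows j ≠ entry rows 3 2 :=
      (wordOf_eq_three_iff h1 h2 2 hc2mem).1 hw2
    -- Step 1 : the wrap step is j₁ and it takes c₁
    have hj₀j₁ : j₀ = j₁ := by
      rcases Nat.lt_trichotomy j₀ j₁ with hlt | heq | hgt
      · exfalso
        have hci : ∀ i < j₀, gF rows i ≠ entry rows 3 1 := by
          intro i hi h
          exact hginj i j₁ (by omega) (by omega) (h.trans hgj₁.symm)
        have h := gF_wrap_all h1 h2 hd23 hj₀m hwrap₀ hc1mem hci
        have hge := entry_one_min (hgmem j₀ hj₀m)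
        have : gF rows j₀ = entry rows 3 1 := le_antisymm h.2 hge
        exact hginj j₀ j₁ hlt (by omega) (this.trans hgj₁.symm)
      · exact heq
      · exfalso
        have hci : ∀ i < j₀, gF rows i ≠ entry rows 3 2 := fun i hi => hall2 i (by omega)
        have h := gF_wrap_all h1 h2 hd23 hj₀m hwrap₀ hc2mem hci
        have hne : gF rows j₀ ≠ entry rows 3 2 := hall2 j₀ hj₀m
        have hlt2 : gF rows j₀ < entry rows 3 2 := lt_of_le_of_ne h.2 hne
        have := eq_entry_one_of_lt_two (hgmem j₀ hj₀m) hlt2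
        exact hginj j₁ j₀ hgt hj₀m (hgj₁.trans this.symm)
    subst hj₀j₁
    have hj₀s : j₀ < s := hj₁s
    have hgj₀ := hgj₁
    -- Step 2 : all b entries are above c₂
    have hb_all : ∀ j, j < s + t → entry rows 3 2 < bF rows j := by
      intro j hj
      by_cases hje : j = j₀
      · subst hje
        exact (gF_wrap_all h1 h2 hd23 hj hwrap₀ hc2mem (fun i hi => hall2 i (by omega))).1
      · rcases Nat.lt_trichotomy (bF rows j) (entry rows 3 2) with hlt | heq | hgt
        · exfalso
          have h := gF_nonwrap_min h1 h2 hj hc2mem (fun i hi => hall2 i (by omega)) hlt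
          have hne : gF rows j ≠ entry rows 3 2 := hall2 j hj
          have hlt2 : gF rows j < entry rows 3 2 := lt_of_le_of_ne h.2 hne
          have heq1 := eq_entry_one_of_lt_two (hgmem j hj) hlt2
          rcases Nat.lt_trichotomy j j₀ with hh | hh | hh
          · exact hginj j j₀ hh hj₀m (heq1.trans hgj₀.symm)
          · exact hje hh
          · exact hginj j₀ j hh hj (hgj₀.trans heq1.symm)
        · exact absurd heq (hne23 _ (bF_mem h1 h2 hj) _ hc2mem)
        · exact hgt
    have hb1c : entry rows 3 2 < entry rows 2 1 := by
      obtain ⟨j, hj, hbj⟩ := bF_surj h1 h2 hb1mem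
      rw [← hbj]
      exact hb_all j hj
    -- Step 3 : after the wrap, everything is small
    have hafter : ∀ j, j₀ < j → j < s+t → bF rows j < gF rows j ∧ gF rows j < bF rows j₀ := by
      intro j hj hj2
      have hnwj := hnw j hj2 (by omega)
      have h := gF_wrap_all h1 h2 hd23 hj₀m hwrap₀ (hgmem j hj2)
        (fun i hi => fun h => hginj i j (by omega) hj2 h)
      exact ⟨hnwj, h.1⟩
    have hj₀1 : j₀ + 1 < s + t := by omega
    -- Step 4 : the wrap step is a non-wrap row1→row2 step, and uses the largest b
    have h4a : aF rows j₀ < bF rows j₀ := by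
      rcases Nat.lt_trichotomy (aF rows j₀) (bF rows j₀) with hlt | heq | hgt
      · exact hlt
      · exact absurd heq.symm (bF_ne_aF h1 h2 hd12 hj₀s)
      · exfalso
        have h := bF_wrap_all h1 h2 hd12 hj₀s hgt ⟨j₀+1, by omega, hj₀1, rfl⟩
        have h2' := hafter (j₀+1) (by omega) hj₀1
        omega
    obtain ⟨jm, hjm, hbjm⟩ := bF_surj h1 h2 hbm_mem
    have hbmain : jm = j₀ := by
      rcases Nat.lt_trichotomy jm j₀ with hlt | heq | hgt
      · exfalso
        have hjms : jm < s := by omega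
        rcases Nat.lt_trichotomy (bF rows jm) (aF rows jm) with hw12 | heq12 | hnw12
        · have h := bF_wrap_all h1 h2 hd12 hjms hw12 ⟨j₀, by omega, hj₀m, rfl⟩
          have hle : bF rows j₀ ≤ bF rows jm := by rw [hbjm]; exact hle2 _ (bF_mem h1 h2 hj₀m)
          have hne : bF rows jm ≠ bF rows j₀ := fun h =>
            absurd (bF_inj h1 h2 (by omega) hj₀m h) (by omega)
          omega
        · exact absurd heq12 (bF_ne_aF h1 h2 hd12 hjms)
        · rcases Nat.lt_or_ge (aF rows jm) (bF rows j₀) with hlt2 | hge2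
          · have h := bF_nonwrap_min h1 h2 hjms ⟨j₀, by omega, hj₀m, rfl⟩ hlt2
            have hle : bF rows j₀ ≤ bF rows jm := by rw [hbjm]; exact hle2 _ (bF_mem h1 h2 hj₀m)
            have hne : bF rows jm ≠ bF rows j₀ := fun h =>
              absurd (bF_inj h1 h2 (by omega) hj₀m h) (by omega)
            omega
          · have halt := aF_lt h1 hlt hj₀s
            omega
      · exact heq
      · exfalso
        have h := hafter jm hgt hjm
        have hle : bF rows j₀ ≤ bF rows jm := by rw [hbjm]; exact hle2 _ (bF_mem h1 h2 hj₀m)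
        omega
    have hbmeq : bF rows j₀ = entry rows 2 (s+t) := by rw [← hbjm, hbmain]
    -- Step 5 : N is taken at step j₀ - 1
    have hbub : bF rows j₀ ≤ n + 2*s + t := hub 2 (by decide) _ (bF_mem h1 h2 hj₀m)
    have hNout : ¬ (∀ i < j₀, gF rows i ≠ entry rows 3 n) := by
      intro hci
      have h := gF_wrap_all h1 h2 hd23 hj₀m hwrap₀ hcnmem hci
      rw [hcn] at h
      omega
    push_neg at hNout
    obtain ⟨iN, hiN, hgiN⟩ := hNout
    have hj₀pos : 1 ≤ j₀ := by omega
    have hgub : ∀ j, j < s + t → gF rows j ≤ n + 2*s + t :=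
      fun j hj => hub 3 (by decide) _ (hgmem j hj)
    have hiNeq : iN = j₀ - 1 := by
      by_contra hne
      have hiN' : iN < j₀ - 1 := by omega
      have hiNs : iN < s := by omega
      -- (i) intermediate steps lie below bF iN
      have hi : ∀ j, iN < j → j < j₀ → gF rows j < bF rows iN := by
        intro j hiNj hjj₀
        have hj' : j < s + t := by omega
        rcases Nat.lt_trichotomy (gF rows j) (bF rows iN) with h | h | h
        · exact h
        · exact absurd h.symm (hne23 _ (bF_mem h1 h2 (by omega)) _ (hgmem j hj'))
        · exfalso
          have hmin := gF_nonwrap_min h1 h2 (show iN < s + t by omega) (hgmem j hj')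
            (fun i hi2 => fun hh => hginj i j (by omega) hj' hh) h
          rw [hgiN] at hmin
          have : gF rows j = entry rows 3 n := by
            rw [hcn]
            have := hgub j hj'
            omega
          exact hginj iN j (by omega) hj' (hgiN.trans this.symm)
      -- (ii) step iN is a non-wrap row1→row2 step
      have hnw12iN : aF rows iN < bF rows iN := by
        rcases Nat.lt_trichotomy (aF rows iN) (bF rows iN) with hlt | heq | hgt
        · exact hlt
        · exact absurd heq.symm (bF_ne_aF h1 h2 hd12 hiNs)
        · exfalso
          have h := bF_wrap_all h1 h2 hd12 hiNs hgt ⟨iN+1, by omega, by omega, rfl⟩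
          have h5 := hi (iN+1) (by omega) (by omega)
          have h6 := hnw (iN+1) (by omega) (by omega)
          omega
      -- (iii) step j₀ - 1 yields a contradiction
      have hjm1 : j₀ - 1 < s := by omega
      have hblt : bF rows (j₀-1) < bF rows iN := by
        have ha := hi (j₀-1) (by omega) (by omega)
        have hb := hnw (j₀-1) (by omega) (by omega)
        omega
      rcases Nat.lt_trichotomy (bF rows (j₀-1)) (aF rows (j₀-1)) with hw12 | heq12 | hnw12
      · have h := bF_wrap_all h1 h2 hd12 hjm1 hw12 ⟨j₀, by omega, hj₀m, rfl⟩
        have := aF_lt h1 (show j₀ - 1 < j₀ by omega) hj₀s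
        omega
      · exact absurd heq12 (bF_ne_aF h1 h2 hd12 hjm1)
      · rcases Nat.lt_or_ge (aF rows iN) (bF rows (j₀-1)) with hlt2 | hge2
        · have h := bF_nonwrap_min h1 h2 hiNs ⟨j₀-1, by omega, by omega, rfl⟩ hlt2
          omega
        · have := aF_lt h1 (show iN < j₀ - 1 by omega) hjm1
          omega
    rw [hiNeq] at hgiN
    -- Step 6 : b at step j₀ - 1 is the second largest
    have hCj₀lt : ∀ c, c ∈ rows 3 → (∀ i < j₀, gF rows i ≠ c) → c < bF rows (j₀-1) := by
      intro c hc hci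
      have hcne : c ≠ entry rows 3 n := fun h => hci (j₀-1) (by omega) (hgiN.trans h.symm)
      rcases Nat.lt_trichotomy c (bF rows (j₀-1)) with h | h | h
      · exact h
      · exact absurd h.symm (hne23 _ (bF_mem h1 h2 (by omega)) _ hc)
      · exfalso
        have hmin := gF_nonwrap_min h1 h2 (show j₀ - 1 < s + t by omega) hc
          (fun i hi2 => hci i (by omega)) h
        rw [hgiN] at hmin
        have : c = entry rows 3 n := by
          rw [hcn]
          have := hub 3 (by decide) c hc
          rw [hcn] at hmin
          omega
        exact hcne this
    have hafter6 : ∀ j, j₀ < j → j < s+t → bF rows j < bF rows (j₀-1) := by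
      intro j hj hj2
      have h := hafter j hj hj2
      have := hCj₀lt (gF rows j) (hgmem j hj2) (fun i hi2 => fun hh => hginj i j (by omega) hj2 hh)
      omega
    have h6b : aF rows (j₀-1) < bF rows (j₀-1) := by
      rcases Nat.lt_trichotomy (aF rows (j₀-1)) (bF rows (j₀-1)) with hlt | heq | hgt
      · exact hlt
      · exact absurd heq.symm (bF_ne_aF h1 h2 hd12 (by omega))
      · exfalso
        have h := bF_wrap_all h1 h2 hd12 (by omega) hgt ⟨j₀+1, by omega, hj₀1, rfl⟩
        have := hafter6 (j₀+1) (by omega) hj₀1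
        omega
    have hneqm : bF rows (j₀-1) ≠ bF rows j₀ := fun h =>
      absurd (bF_inj h1 h2 (by omega) hj₀m h) (by omega)
    have hble : ∀ j, j < s+t → j ≠ j₀ → bF rows j ≤ bF rows (j₀-1) := by
      intro j hj hne
      rcases Nat.lt_trichotomy j j₀ with hlt | heq | hgt
      · rcases Nat.lt_or_ge j (j₀ - 1) with hjlt | hjge
        · by_contra hgt2
          push_neg at hgt2
          have hjs : j < s := by omega
          rcases Nat.lt_trichotomy (bF rows j) (aF rows j) with hw12 | heq12 | hnw12
          · have h := bF_wrap_all h1 h2 hd12 hjs hw12 ⟨j₀-1, by omega, by omega, rfl⟩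
            omega
          · exact absurd heq12 (bF_ne_aF h1 h2 hd12 hjs)
          · rcases Nat.lt_or_ge (aF rows j) (bF rows (j₀-1)) with hlt2 | hge2
            · have h := bF_nonwrap_min h1 h2 hjs ⟨j₀-1, by omega, by omega, rfl⟩ hlt2
              omega
            · have := aF_lt h1 (show j < j₀ - 1 by omega) (by omega)
              omega
        · have : j = j₀ - 1 := by omega
          rw [this]
      · exact absurd heq hne
      · exact le_of_lt (hafter6 j hgt hj)
    have hbm1lt : entry rows 2 (s+t-1) < entry rows 2 (s+t) :=
      entry_lt' (by omega) (by omega) (by rw [h2])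
    have hbm1eq : bF rows (j₀-1) = entry rows 2 (s+t-1) := by
      apply le_antisymm
      · have h := le_entry_pred' (bF_mem h1 h2 (show j₀ - 1 < s + t by omega))
          (by rw [h2]; omega) (by rw [h2, ← hbmeq]; exact hneqm)
        rwa [h2] at h
      · obtain ⟨j', hj', hbj'⟩ := bF_surj h1 h2 hbm1mem
        have hjne : j' ≠ j₀ := by
          intro h
          rw [h, hbmeq] at hbj'
          omega
        rw [← hbj']
        exact hble j' hj' hjne
    -- Step 7 : assemble
    refine ⟨⟨j₀, hj₀pos, hj₀s, ?_, ?_, ?_, ?_⟩, hb1c⟩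
    · -- Bullies (entry 1 j₀) (entry 2 (s+t-1))
      refine ⟨?_, ?_⟩
      · rw [(edge_mem_iff h1 h2 (x := entry rows 1 j₀) (y := entry rows 2 (s+t-1)))]
        exact Or.inl ⟨j₀ - 1, by omega, rfl, hbm1eq.symm⟩
      · show entry rows 1 j₀ < entry rows 2 (s+t-1)
        rw [← hbm1eq]
        exact h6b
    · -- Bullies (entry 2 (s+t-1)) (entry 3 n)
      refine ⟨?_, ?_⟩
      · rw [(edge_mem_iff h1 h2 (x := entry rows 2 (s+t-1)) (y := entry rows 3 n))]
        exact Or.inr ⟨j₀ - 1, by omega, hbm1eq.symm, hgiN.symm⟩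
      · rw [← hbm1eq, ← hgiN]
        exact hnw (j₀-1) (by omega) (by omega)
    · -- Bullies (entry 1 (j₀+1)) (entry 2 (s+t))
      refine ⟨?_, ?_⟩
      · rw [(edge_mem_iff h1 h2 (x := entry rows 1 (j₀+1)) (y := entry rows 2 (s+t)))]
        exact Or.inl ⟨j₀, hj₀s, rfl, hbmeq.symm⟩
      · show entry rows 1 (j₀+1) < entry rows 2 (s+t)
        rw [← hbmeq]
        exact h4a
    · -- WrapBullies (entry 2 (s+t)) (entry 3 1)
      refine ⟨?_, ?_⟩
      · rw [(edge_mem_iff h1 h2 (x := entry rows 2 (s+t)) (y := entry rows 3 1))]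
        exact Or.inr ⟨j₀, hj₀m, hbmeq.symm, hgj₀.symm⟩
      · rw [← hbmeq, ← hgj₀]
        exact hwrap₀
  · -- BACKWARD DIRECTION
    rintro ⟨⟨i, hi1, his, ⟨hB1e, hB1l⟩, ⟨hB2e, hB2l⟩, ⟨hB3e, hB3l⟩, ⟨hWe, hWl⟩⟩, hb1c⟩
    have ha_i : entry rows 1 i ∈ rows 1 := entry_mem' (by omega) (by rw [h1]; omega)
    have ha_i1 : entry rows 1 (i+1) ∈ rows 1 := entry_mem' (by omega) (by rw [h1]; omega)
    -- decode edge B1 : a_i → b_{m-1}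
    have hb1d : bF rows (i-1) = entry rows 2 (s+t-1) := by
      rcases (edge_mem_iff h1 h2).1 hB1e with ⟨k, hk, hxk, hyk⟩ | ⟨j, hj, hxj, hyj⟩
      · have : k = i - 1 := by
          have : aF rows (i-1) = aF rows k := by
            show entry rows 1 i = aF rows k
            exact hxk
          exact aF_inj h1 hk (by omega) this.symm
        rw [← this, ← hyk]
      · exfalso
        have : entry rows 1 i ∈ rows 2 := hxj ▸ bF_mem h1 h2 hj
        exact Finset.disjoint_left.1 hd12 ha_i this
    -- decode edge B2 : b_{m-1} → c_n
    have hg1d : gF rows (i-1) = entry rows 3 n := by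
      rcases (edge_mem_iff h1 h2).1 hB2e with ⟨k, hk, hxk, hyk⟩ | ⟨j, hj, hxj, hyj⟩
      · exfalso
        have : entry rows 2 (s+t-1) ∈ rows 1 := hxk ▸ aF_mem h1 hk
        exact Finset.disjoint_left.1 hd12 this hbm1mem
      · have hji : j = i - 1 := by
          apply bF_inj h1 h2 hj (by omega)
          rw [← hxj, hb1d]
        rw [← hji, ← hyj]
    -- decode edge B3 : a_{i+1} → b_m
    have hb2d : bF rows i = entry rows 2 (s+t) := by
      rcases (edge_mem_iff h1 h2).1 hB3e with ⟨k, hk, hxk, hyk⟩ | ⟨j, hj, hxj, hyj⟩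
      · have hki : k = i := by
          have : aF rows i = aF rows k := by
            show entry rows 1 (i+1) = aF rows k
            exact hxk
          exact aF_inj h1 hk his this.symm
        rw [← hki, ← hyk]
      · exfalso
        have : entry rows 1 (i+1) ∈ rows 2 := hxj ▸ bF_mem h1 h2 hj
        exact Finset.disjoint_left.1 hd12 ha_i1 this
    -- decode edge W : b_m → c_1 (wrap)
    have hg2d : gF rows i = entry rows 3 1 := by
      rcases (edge_mem_iff h1 h2).1 hWe with ⟨k, hk, hxk, hyk⟩ | ⟨j, hj, hxj, hyj⟩
      · exfalso
        have : entry rows 2 (s+t) ∈ rows 1 := hxk ▸ aF_mem h1 hk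
        exact Finset.disjoint_left.1 hd12 this hbm_mem
      · have hji : j = i := by
          apply bF_inj h1 h2 hj (by omega)
          rw [← hxj, hb2d]
        rw [← hji, ← hyj]
    have hwi : gF rows i < bF rows i := by
      rw [hg2d, hb2d]
      exact hWl
    have hij₀ : i = j₀ := huniq' i (by omega) hwi
    constructor
    · rw [wordOf_eq_one_iff h1 h2 1]
      exact ⟨i, his, hg2d⟩
    · rw [wordOf_eq_three_iff h1 h2 2 hc2mem]
      intro j hj hgj
      by_cases hje : j = i
      · rw [hje, hg2d] at hgj
        omega
      · have hnwj : bF rows j < gF rows j := hnw j hj (by omega)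
        have hb1le : entry rows 2 1 ≤ bF rows j := entry_one_min (bF_mem h1 h2 hj)
        rw [hgj] at hnwj
        omega


end CMLQ
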